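/- arXiv:2102.00557 — 4 statements merged into one kernel-verified Lean document; each statement's English description precedes it below -/
import Mathlib

section
/- Let Ω ⊂ ℝ^N be an open set, q ≥ 1, u ∈ L^q(Ω, ℝ^m), and t₁, t₂ > 0. Let G ⊂ Ω be open such that either G is convex or t₁ < dist(G, ℝ^N \ Ω). Then ∫_{S^{N-1}} ∫_G (1/(t₁+t₂)^q) |u(x+(t₁+t₂)n) − u(x)|^q χ_G(x+(t₁+t₂)n) dx dH^{N-1}(n) ≤ (t₂/(t₁+t₂)) ∫_{S^{N-1}} ∫_Ω |u(x+t₂n)−u(x)|^q/t₂^q · χ_Ω(x+t₂n) dx dH^{N-1}(n) + (t₁/(t₁+t₂)) ∫_{S^{N-1}} ∫_Ω |u(x+t₁n)−u(x)|^q/t₁^q · χ_Ω(x+t₁n) dx dH^{N-1}(n). -/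
/-!
For a fixed direction `n`, the triangle inequality through the intermediate point `x + t₂ n`
and convexity of `s ↦ s ^ q` with weights `t₂ / (t₁ + t₂)`, `t₁ / (t₁ + t₂)` bound the difference
quotient at scale `t₁ + t₂` by those at scales `t₂` (at `x`) and `t₁` (at `x + t₂ n`). The
intermediate point lies in `Ω`, either by convexity of `G` or because it is at distance `t₁`
from `x + (t₁ + t₂) n ∈ G`, so the translation `y = x + t₂ n` turns the second term into an
integral over `Ω`. Integrating over the sphere finishes the proof once `u` is replaced by a
strongly measurable representative, which the factors `χ_Ω` make harmless.
-/

open MeasureTheory Metric Set ENNReal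

noncomputable section

theorem norm_sub_rpow_div_add_le {F : Type*} [SeminormedAddCommGroup F] {q t₁ t₂ : ℝ}
    (hq : 1 ≤ q) (ht₁ : 0 < t₁) (ht₂ : 0 < t₂) (a b c : F) :
    ‖a - c‖ ^ q / (t₁ + t₂) ^ q ≤
      t₂ / (t₁ + t₂) * (‖b - c‖ ^ q / t₂ ^ q) + t₁ / (t₁ + t₂) * (‖a - b‖ ^ q / t₁ ^ q) := by
  have hT : 0 < t₁ + t₂ := add_pos ht₁ ht₂
  have hconv := (convexOn_rpow hq).2 (mem_Ici.2 (by positivity : 0 ≤ ‖b - c‖ / t₂))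
    (mem_Ici.2 (by positivity : 0 ≤ ‖a - b‖ / t₁)) (by positivity : 0 ≤ t₂ / (t₁ + t₂))
    (by positivity : 0 ≤ t₁ / (t₁ + t₂)) (by field_simp; ring)
  have hmean : t₂ / (t₁ + t₂) * (‖b - c‖ / t₂) + t₁ / (t₁ + t₂) * (‖a - b‖ / t₁) =
      (‖a - b‖ + ‖b - c‖) / (t₁ + t₂) := by
    field_simp; ring
  simp only [smul_eq_mul, hmean] at hconv
  rw [← Real.div_rpow (norm_nonneg _) hT.le, ← Real.div_rpow (norm_nonneg _) ht₂.le,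
    ← Real.div_rpow (norm_nonneg _) ht₁.le]
  calc (‖a - c‖ / (t₁ + t₂)) ^ q ≤ ((‖a - b‖ + ‖b - c‖) / (t₁ + t₂)) ^ q := by
        gcongr; exact norm_sub_le_norm_sub_add_norm_sub a b c
    _ ≤ _ := hconv

theorem Convex.add_smul_mem_of_le {E : Type*} [AddCommGroup E] [Module ℝ E] {G : Set E}
    (hG : Convex ℝ G) {x n : E} {t T : ℝ} (hx : x ∈ G) (hT : x + T • n ∈ G) (ht : 0 ≤ t)
    (htT : t ≤ T) : x + t • n ∈ G := by
  rcases ht.eq_or_lt with rfl | ht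
  · simpa using hx
  have hcomb : x + t • n = x + (t / T) • (T • n) := by
    rw [smul_smul, div_mul_cancel₀ _ (ht.trans_le htT).ne']
  rw [hcomb]
  have hT₀ : 0 ≤ T := ht.le.trans htT
  exact hG.add_smul_mem hx hT ⟨div_nonneg ht.le hT₀, div_le_one_of_le₀ htT hT₀⟩

theorem mem_of_dist_le_of_lt_iInf_infEDist {E : Type*} [PseudoMetricSpace E] {G Ω : Set E}
    {r : ℝ} (h : ENNReal.ofReal r < ⨅ x ∈ G, infEDist x Ωᶜ) {y z : E} (hy : y ∈ G)
    (hzy : dist y z ≤ r) : z ∈ Ω := by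
  by_contra hz
  have hle : ⨅ x ∈ G, infEDist x Ωᶜ ≤ ENNReal.ofReal r :=
    calc ⨅ x ∈ G, infEDist x Ωᶜ ≤ infEDist y Ωᶜ := iInf₂_le y hy
      _ ≤ edist y z := infEDist_le_edist_of_mem hz
      _ ≤ ENNReal.ofReal r := by rw [edist_dist]; exact ENNReal.ofReal_le_ofReal hzy
  exact (h.trans_le hle).false

theorem setLIntegral_le_mul_add_mul {α : Type*} [MeasurableSpace α] {μ : Measure α} {s : Set α}
    (hs : MeasurableSet s) {f g h : α → ℝ≥0∞} {a b : ℝ≥0∞} (hg : Measurable g) (hb : b ≠ ∞)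
    (hfgh : ∀ x ∈ s, f x ≤ a * g x + b * h x) :
    ∫⁻ x in s, f x ∂μ ≤ a * ∫⁻ x in s, g x ∂μ + b * ∫⁻ x in s, h x ∂μ :=
  calc ∫⁻ x in s, f x ∂μ ≤ ∫⁻ x in s, (a * g x + b * h x) ∂μ := setLIntegral_mono' hs hfgh
    _ = _ := by
      rw [lintegral_add_left (hg.const_mul a), lintegral_const_mul a hg,
        lintegral_const_mul' b h hb]

section TruncDiffQuot

variable {E F : Type*} [NormedAddCommGroup E] [NormedSpace ℝ E] [NormedAddCommGroup F]

def truncDiffQuot (A : Set E) (u : E → F) (q t : ℝ) (n x : E) : ℝ≥0∞ :=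
  A.indicator (fun _ => 1) (x + t • n) * ENNReal.ofReal (‖u (x + t • n) - u x‖ ^ q / t ^ q)

theorem truncDiffQuot_add_le {G Ω : Set E} (hGΩ : G ⊆ Ω) (u : E → F) {q t₁ t₂ : ℝ} (hq : 1 ≤ q)
    (ht₁ : 0 < t₁) (ht₂ : 0 < t₂) {n x : E} (hmid : x + (t₁ + t₂) • n ∈ G → x + t₂ • n ∈ Ω) :
    truncDiffQuot G u q (t₁ + t₂) n x ≤
      ENNReal.ofReal (t₂ / (t₁ + t₂)) * truncDiffQuot Ω u q t₂ n x +
        ENNReal.ofReal (t₁ / (t₁ + t₂)) * Ω.indicator (truncDiffQuot Ω u q t₁ n) (x + t₂ • n) := by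
  by_cases hxG : x + (t₁ + t₂) • n ∈ G
  · have hshift : x + t₂ • n + t₁ • n = x + (t₁ + t₂) • n := by module
    simp only [truncDiffQuot, indicator_of_mem hxG, indicator_of_mem (hmid hxG),
      hshift, indicator_of_mem (hGΩ hxG), one_mul]
    rw [← ofReal_mul (by positivity), ← ofReal_mul (by positivity),
      ← ofReal_add (by positivity) (by positivity)]
    exact ofReal_le_ofReal (norm_sub_rpow_div_add_le hq ht₁ ht₂ _ _ _)
  · simp [truncDiffQuot, indicator_of_notMem hxG]

variable [MeasurableSpace E] [BorelSpace E] (μ : Measure E) [μ.IsAddRightInvariant]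

theorem setLIntegral_truncDiffQuot_congr {A : Set E} (hA : MeasurableSet A) {u v : E → F}
    (huv : u =ᵐ[μ.restrict A] v) (q t : ℝ) (n : E) :
    ∫⁻ x in A, truncDiffQuot A u q t n x ∂μ = ∫⁻ x in A, truncDiffQuot A v q t n x ∂μ := by
  have hmem : ∀ᵐ y ∂μ, y ∈ A → u y = v y := (ae_restrict_iff' hA).1 huv
  have hshift : ∀ᵐ x ∂μ, x + t • n ∈ A → u (x + t • n) = v (x + t • n) :=
    (measurePreserving_add_right μ (t • n)).quasiMeasurePreserving.ae hmem
  refine setLIntegral_congr_fun_ae hA ?_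
  filter_upwards [hmem, hshift] with x hx hxt hxA
  by_cases hxtA : x + t • n ∈ A
  · simp [truncDiffQuot, hx hxA, hxt hxtA]
  · simp [truncDiffQuot, indicator_of_notMem hxtA]

variable [SecondCountableTopology E]

theorem measurable_uncurry_truncDiffQuot {A : Set E} (hA : MeasurableSet A) {u : E → F}
    (hu : StronglyMeasurable u) (q t : ℝ) :
    Measurable (Function.uncurry (truncDiffQuot A u q t)) := by
  have hshift : Measurable fun p : E × E => p.2 + t • p.1 := by fun_prop
  have hdiff := (hu.comp_measurable hshift).sub (hu.comp_measurable measurable_snd)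
  exact ((measurable_const.indicator hA).comp hshift).mul
    ((hdiff.norm.measurable.pow_const q).div_const _).ennreal_ofReal

theorem setLIntegral_truncDiffQuot_add_le {G Ω : Set E} (hG : MeasurableSet G)
    (hΩ : MeasurableSet Ω) (hGΩ : G ⊆ Ω) {u : E → F} (hu : StronglyMeasurable u) {q t₁ t₂ : ℝ}
    (hq : 1 ≤ q) (ht₁ : 0 < t₁) (ht₂ : 0 < t₂) {n : E}
    (hmid : ∀ x ∈ G, x + (t₁ + t₂) • n ∈ G → x + t₂ • n ∈ Ω) :
    ∫⁻ x in G, truncDiffQuot G u q (t₁ + t₂) n x ∂μ ≤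
      ENNReal.ofReal (t₂ / (t₁ + t₂)) * ∫⁻ x in Ω, truncDiffQuot Ω u q t₂ n x ∂μ +
        ENNReal.ofReal (t₁ / (t₁ + t₂)) * ∫⁻ x in Ω, truncDiffQuot Ω u q t₁ n x ∂μ := by
  have hshifted : ∫⁻ x in G, Ω.indicator (truncDiffQuot Ω u q t₁ n) (x + t₂ • n) ∂μ ≤
      ∫⁻ y in Ω, truncDiffQuot Ω u q t₁ n y ∂μ :=
    calc _ ≤ ∫⁻ x, Ω.indicator (truncDiffQuot Ω u q t₁ n) (x + t₂ • n) ∂μ :=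
          setLIntegral_le_lintegral _ _
      _ = _ := by rw [lintegral_add_right_eq_self, lintegral_indicator hΩ]
  calc _ ≤ ENNReal.ofReal (t₂ / (t₁ + t₂)) * ∫⁻ x in G, truncDiffQuot Ω u q t₂ n x ∂μ +
        ENNReal.ofReal (t₁ / (t₁ + t₂)) *
          ∫⁻ x in G, Ω.indicator (truncDiffQuot Ω u q t₁ n) (x + t₂ • n) ∂μ :=
        setLIntegral_le_mul_add_mul hG
          ((measurable_uncurry_truncDiffQuot hΩ hu q t₂).comp measurable_prodMk_left)
          ofReal_ne_top fun x hx => truncDiffQuot_add_le hGΩ u hq ht₁ ht₂ (hmid x hx)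
    _ ≤ _ := add_le_add (mul_le_mul_right (lintegral_mono_set hGΩ) _) (mul_le_mul_right hshifted _)

theorem setLIntegral_setLIntegral_truncDiffQuot_add_le [SFinite μ] (ν : Measure E) {S G Ω : Set E}
    (hS : MeasurableSet S) (hG : MeasurableSet G) (hΩ : MeasurableSet Ω) (hGΩ : G ⊆ Ω)
    {u : E → F} (hu : StronglyMeasurable u) {q t₁ t₂ : ℝ} (hq : 1 ≤ q) (ht₁ : 0 < t₁)
    (ht₂ : 0 < t₂) (hmid : ∀ n ∈ S, ∀ x ∈ G, x + (t₁ + t₂) • n ∈ G → x + t₂ • n ∈ Ω) :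
    ∫⁻ n in S, ∫⁻ x in G, truncDiffQuot G u q (t₁ + t₂) n x ∂μ ∂ν ≤
      ENNReal.ofReal (t₂ / (t₁ + t₂)) * ∫⁻ n in S, ∫⁻ x in Ω, truncDiffQuot Ω u q t₂ n x ∂μ ∂ν +
        ENNReal.ofReal (t₁ / (t₁ + t₂)) *
          ∫⁻ n in S, ∫⁻ x in Ω, truncDiffQuot Ω u q t₁ n x ∂μ ∂ν :=
  setLIntegral_le_mul_add_mul hS
    (measurable_uncurry_truncDiffQuot hΩ hu q t₂).lintegral_prod_right' ofReal_ne_top fun n hn =>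
      setLIntegral_truncDiffQuot_add_le μ hG hΩ hGΩ hu hq ht₁ ht₂ (hmid n hn)

end TruncDiffQuot

/-- splitting inequality for the spherical difference quotients at scale
`t₁ + t₂` in terms of those at scales `t₁` and `t₂`, for `G ⊆ Ω` open which is either
convex or satisfies `t₁ < dist(G, ℝ^N ∖ Ω)`. -/
theorem stmt_10 (N m : ℕ) (Ω : Set (EuclideanSpace ℝ (Fin N))) (hΩopen : IsOpen Ω)
    (q : ℝ) (hq : 1 ≤ q)
    (u : EuclideanSpace ℝ (Fin N) → EuclideanSpace ℝ (Fin m))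
    (hu : MemLp u (ENNReal.ofReal q) (volume.restrict Ω))
    (t₁ t₂ : ℝ) (ht₁ : 0 < t₁) (ht₂ : 0 < t₂)
    (G : Set (EuclideanSpace ℝ (Fin N))) (hGopen : IsOpen G) (hGΩ : G ⊆ Ω)
    (hG : Convex ℝ G ∨
      ENNReal.ofReal t₁ < ⨅ x ∈ G, EMetric.infEdist x Ωᶜ) :
    (∫⁻ n in sphere (0 : EuclideanSpace ℝ (Fin N)) 1,
        (∫⁻ x in G,
          (G.indicator (fun _ => (1 : ℝ≥0∞)) (x + (t₁ + t₂) • n)) *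
            ENNReal.ofReal (‖u (x + (t₁ + t₂) • n) - u x‖ ^ q / (t₁ + t₂) ^ q))
        ∂(μH[(N : ℝ) - 1])) ≤
      ENNReal.ofReal (t₂ / (t₁ + t₂)) *
        (∫⁻ n in sphere (0 : EuclideanSpace ℝ (Fin N)) 1,
          (∫⁻ x in Ω,
            (Ω.indicator (fun _ => (1 : ℝ≥0∞)) (x + t₂ • n)) *
              ENNReal.ofReal (‖u (x + t₂ • n) - u x‖ ^ q / t₂ ^ q))
          ∂(μH[(N : ℝ) - 1])) +
      ENNReal.ofReal (t₁ / (t₁ + t₂)) *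
        (∫⁻ n in sphere (0 : EuclideanSpace ℝ (Fin N)) 1,
          (∫⁻ x in Ω,
            (Ω.indicator (fun _ => (1 : ℝ≥0∞)) (x + t₁ • n)) *
              ENNReal.ofReal (‖u (x + t₁ • n) - u x‖ ^ q / t₁ ^ q))
          ∂(μH[(N : ℝ) - 1])) := by
  obtain ⟨v, hv, huv⟩ := hu.aestronglyMeasurable
  have hmid : ∀ n ∈ sphere (0 : EuclideanSpace ℝ (Fin N)) 1, ∀ x ∈ G,
      x + (t₁ + t₂) • n ∈ G → x + t₂ • n ∈ Ω := by
    intro n hn x hx hxT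
    rcases hG with hconv | hdist
    · exact hGΩ (hconv.add_smul_mem_of_le hx hxT ht₂.le (by linarith))
    · refine mem_of_dist_le_of_lt_iInf_infEDist hdist hxT (le_of_eq ?_)
      rw [dist_add_left, dist_eq_norm, ← sub_smul, norm_smul, mem_sphere_zero_iff_norm.1 hn,
        add_sub_cancel_right, Real.norm_of_nonneg ht₁.le, mul_one]
  have key := setLIntegral_setLIntegral_truncDiffQuot_add_le volume (μH[(N : ℝ) - 1])
    isClosed_sphere.measurableSet hGopen.measurableSet hΩopen.measurableSet hGΩ hv hq ht₁ ht₂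
    hmid
  simp only [← setLIntegral_truncDiffQuot_congr volume hΩopen.measurableSet huv,
    ← setLIntegral_truncDiffQuot_congr volume hGopen.measurableSet
      (ae_restrict_of_ae_restrict_of_subset hGΩ huv)] at key
  exact key
end
end

section
/- Let Ω ⊂ ℝ^N be an open set, q ≥ 1, u ∈ L^q(Ω, ℝ^m), and t > 0. Let G ⊂ Ω be open with L^N(∂G) = 0 and such that either t < dist(G, ℝ^N \ Ω) or G is convex. Then ∫_{S^{N-1}} ∫_G |u(x+tn)−u(x)|^q/t^q · χ_G(x+tn) dx dH^{N-1}(n) ≤ liminf_{ε→0⁺} ∫_{S^{N-1}} ∫_Ω |u(x+εn)−u(x)|^q/ε^q · χ_Ω(x+εn) dx dH^{N-1}(n). -/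
/-! Fix a unit direction `n`. For `0 < ε ≤ t` put `M = ⌊t/ε⌋` and `s = Mε`. Telescoping
`u(x + sn) - u(x)` over the `M` steps of length `ε` and applying Jensen's inequality bounds the
difference quotient at scale `s` by the average of the `M` translated difference quotients at
scale `ε`; by translation invariance each of them integrates to at most the quotient over `Ω`,
provided the intermediate points `x + jεn` stay in `Ω`, which is what the distance or convexity
assumption on `G` guarantees. As `ε → 0⁺`, `s → t`; continuity of translations in `Lᵠ` gives
a.e. convergence of `u(x + sn)` along a subsequence, and Fatou's lemma (with `G` open) bounds
the quotient over `G` at scale `t`. A second application of Fatou's lemma, over the sphere,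
concludes. -/

open MeasureTheory Metric Set Filter ENNReal
open scoped Topology

theorem Filter.le_liminf_of_forall_exists_subseq {α β : Type*} [CompleteLinearOrder β]
    [TopologicalSpace β] [OrderTopology β] [FirstCountableTopology β]
    {l : Filter α} [l.IsCountablyGenerated] {f : α → β} {a : β}
    (h : ∀ x : ℕ → α, Tendsto x atTop l →
      ∃ ρ : ℕ → ℕ, StrictMono ρ ∧ a ≤ liminf (fun j => f (x (ρ j))) atTop) :
    a ≤ liminf f l := by
  rcases l.eq_or_neBot with rfl | hl
  · simp
  obtain ⟨x, hfx, hx⟩ := exists_seq_tendsto_liminf (f := l) (u := f)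
  obtain ⟨ρ, hρ, ha⟩ := h x hx
  exact ha.trans (hfx.comp hρ.tendsto_atTop).liminf_eq.le

theorem tendsto_natFloor_div_mul_nhdsGT {t : ℝ} (ht : 0 ≤ t) :
    Tendsto (fun ε : ℝ => (⌊t / ε⌋₊ : ℝ) * ε) (𝓝[>] 0) (𝓝 t) := by
  have hlow : Tendsto (fun ε : ℝ => t - ε) (𝓝[>] 0) (𝓝 t) := by
    simpa using (tendsto_const_nhds.sub tendsto_id : Tendsto (fun ε : ℝ => t - ε) (𝓝 0) _)
      |>.mono_left nhdsWithin_le_nhds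
  refine tendsto_of_tendsto_of_tendsto_of_le_of_le' hlow tendsto_const_nhds ?_ ?_ <;>
    filter_upwards [self_mem_nhdsWithin] with ε (hε : 0 < ε)
  · have := Nat.lt_floor_add_one (t / ε)
    rw [div_lt_iff₀ hε] at this
    linarith
  · exact (le_div_iff₀ hε).1 (Nat.floor_le (by positivity))

theorem norm_sub_rpow_div_le_inv_mul_sum {F : Type*} [SeminormedAddCommGroup F] (y : ℕ → F)
    {M : ℕ} (hM : M ≠ 0) {q ε : ℝ} (hq : 1 ≤ q) (hε : 0 < ε) :
    ‖y M - y 0‖ ^ q / (M * ε) ^ q ≤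
      (M : ℝ)⁻¹ * ∑ j ∈ Finset.range M, ‖y (j + 1) - y j‖ ^ q / ε ^ q := by
  have hM0 : (0 : ℝ) < M := by positivity
  have htel : ‖y M - y 0‖ ≤ ∑ j ∈ Finset.range M, ‖y (j + 1) - y j‖ := by
    rw [← Finset.sum_range_sub]
    exact norm_sum_le _ _
  have hpow : ‖y M - y 0‖ ^ q ≤
      (M : ℝ) ^ q * ((M : ℝ)⁻¹ * ∑ j ∈ Finset.range M, ‖y (j + 1) - y j‖ ^ q) :=
    calc ‖y M - y 0‖ ^ q ≤ (∑ j ∈ Finset.range M, ‖y (j + 1) - y j‖) ^ q :=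
          Real.rpow_le_rpow (norm_nonneg _) htel (by linarith)
      _ ≤ (M : ℝ) ^ (q - 1) * ∑ j ∈ Finset.range M, ‖y (j + 1) - y j‖ ^ q := by
          simpa using Real.rpow_sum_le_const_mul_sum_rpow_of_nonneg (Finset.range M) hq
            (fun j _ => norm_nonneg (y (j + 1) - y j))
      _ = _ := by rw [Real.rpow_sub_one hM0.ne', div_eq_mul_inv, mul_assoc]
  rw [Real.mul_rpow hM0.le hε.le, ← div_div, ← Finset.sum_div, ← mul_div_assoc]
  gcongr
  rwa [div_le_iff₀' (by positivity)]

theorem add_mem_of_norm_le_of_lt_iInf_infEdist {E : Type*} [SeminormedAddCommGroup E]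
    {G Ω : Set E} {t : ℝ} (hG : ENNReal.ofReal t < ⨅ x ∈ G, Metric.infEDist x Ωᶜ)
    {x v : E} (hx : x ∈ G) (hv : ‖v‖ ≤ t) : x + v ∈ Ω := by
  by_contra hxv
  have : Metric.infEDist x Ωᶜ ≤ ENNReal.ofReal t := calc
    Metric.infEDist x Ωᶜ ≤ edist x (x + v) := Metric.infEDist_le_edist_of_mem hxv
    _ = ENNReal.ofReal ‖v‖ := by rw [edist_dist, dist_self_add_right]
    _ ≤ ENNReal.ofReal t := ENNReal.ofReal_le_ofReal hv
  exact (hG.trans_le (biInf_le _ hx)).not_ge this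

theorem Convex.add_smul_mem_of_mem_Icc {E : Type*} [AddCommGroup E] [Module ℝ E] {G : Set E}
    (hG : Convex ℝ G) {x v : E} {s r : ℝ} (hs : 0 < s) (hx : x ∈ G) (hxs : x + s • v ∈ G)
    (hr : r ∈ Icc 0 s) : x + r • v ∈ G := by
  have := hG.add_smul_mem hx hxs ⟨div_nonneg hr.1 hs.le, div_le_one_of_le₀ hr.2 hs.le⟩
  rwa [smul_smul, div_mul_cancel₀ _ hs.ne'] at this

section Translation

variable {E F : Type*} [NormedAddCommGroup E] [MeasurableSpace E] [BorelSpace E]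
  [NormedAddCommGroup F] {μ : Measure E}

theorem MeasureTheory.MemLp.exists_subseq_ae_tendsto_comp_add [μ.IsAddRightInvariant]
    [μ.InnerRegularCompactLTTop] [IsLocallyFiniteMeasure μ] {p : ℝ≥0∞} [Fact (1 ≤ p)]
    (hp : p ≠ ∞) {f : E → F} (hf : MemLp f p μ) {v : ℕ → E} {v₀ : E}
    (hv : Tendsto v atTop (𝓝 v₀)) :
    ∃ ρ : ℕ → ℕ, StrictMono ρ ∧
      ∀ᵐ x ∂μ, Tendsto (fun j => f (x + v (ρ j))) atTop (𝓝 (f (x + v₀))) := by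
  let τ : C(E, C(E, E)) := ContinuousMap.curry ⟨fun p : E × E => p.2 + p.1, by fun_prop⟩
  have hτ (a : E) : MeasurePreserving (τ a) μ μ := measurePreserving_add_right μ a
  have hlim : Tendsto (fun k => Lp.compMeasurePreserving (τ (v k)) (hτ _) (hf.toLp f)) atTop
      (𝓝 (Lp.compMeasurePreserving (τ v₀) (hτ v₀) (hf.toLp f))) :=
    tendsto_const_nhds.compMeasurePreservingLp ((τ.continuous.tendsto v₀).comp hv) _ _ hp
  obtain ⟨ρ, hρ, hae⟩ := (tendstoInMeasure_of_tendsto_Lp hlim).exists_seq_tendsto_ae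
  have hcoe (a : E) : (Lp.compMeasurePreserving (τ a) (hτ a) (hf.toLp f) : E → F)
      =ᵐ[μ] fun x => f (x + a) :=
    (Lp.coeFn_compMeasurePreserving _ (hτ a)).trans
      (ae_eq_comp (hτ a).measurable.aemeasurable (by rw [(hτ a).map_eq]; exact hf.coeFn_toLp))
  refine ⟨ρ, hρ, ?_⟩
  filter_upwards [hae, hcoe v₀, ae_all_iff.2 fun j => hcoe (v (ρ j))] with x hx hx₀ hxj
  rw [← hx₀]
  exact hx.congr hxj

end Translation

section DiffQuot

variable {E F : Type*} [NormedAddCommGroup E] [NormedSpace ℝ E] [NormedAddCommGroup F]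

noncomputable def diffQuotIntegrand (S : Set E) (w : E → F) (q ε : ℝ) (n x : E) : ℝ≥0∞ :=
  S.indicator (fun _ => (1 : ℝ≥0∞)) (x + ε • n) *
    ENNReal.ofReal (‖w (x + ε • n) - w x‖ ^ q / ε ^ q)

variable {S G Ω : Set E} {u w : E → F} {q t ε : ℝ} {n : E}

theorem diffQuotIntegrand_of_mem {x : E} (hx : x + ε • n ∈ S) :
    diffQuotIntegrand S w q ε n x = ENNReal.ofReal (‖w (x + ε • n) - w x‖ ^ q / ε ^ q) := by
  rw [diffQuotIntegrand, indicator_of_mem hx, one_mul]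

theorem diffQuotIntegrand_of_notMem {x : E} (hx : x + ε • n ∉ S) :
    diffQuotIntegrand S w q ε n x = 0 := by
  rw [diffQuotIntegrand, indicator_of_notMem hx, zero_mul]

theorem diffQuotIntegrand_natCast_mul_le {M : ℕ} (hM : M ≠ 0) (hq : 1 ≤ q) (hε : 0 < ε) {x : E}
    (hseg : x + (M * ε) • n ∈ G → ∀ r ∈ Icc 0 (M * ε), x + r • n ∈ Ω) :
    diffQuotIntegrand G w q (M * ε) n x ≤
      (M : ℝ≥0∞)⁻¹ * ∑ j ∈ Finset.range M,
        Ω.indicator (diffQuotIntegrand Ω w q ε n) (x + (j * ε) • n) := by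
  by_cases hxG : x + (M * ε) • n ∈ G
  swap
  · rw [diffQuotIntegrand_of_notMem hxG]
    exact zero_le
  have hstep (j : ℕ) : x + (j * ε) • n + ε • n = x + ((j + 1 : ℕ) * ε) • n := by
    rw [add_assoc, ← add_smul]
    push_cast
    ring_nf
  have hterm : ∀ j ∈ Finset.range M,
      Ω.indicator (diffQuotIntegrand Ω w q ε n) (x + (j * ε) • n) =
        ENNReal.ofReal (‖w (x + ((j + 1 : ℕ) * ε) • n) - w (x + (j * ε) • n)‖ ^ q / ε ^ q) := by
    intro j hj
    have hjM : (j + 1 : ℕ) * ε ≤ M * ε := by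
      gcongr
      exact_mod_cast Finset.mem_range.1 hj
    have hmem (i : ℕ) (hi : i ≤ j + 1) : x + (i * ε) • n ∈ Ω :=
      hseg hxG _ ⟨by positivity, le_trans (by gcongr) hjM⟩
    rw [indicator_of_mem (hmem j (by omega)),
      diffQuotIntegrand_of_mem (by rw [hstep]; exact hmem _ le_rfl), hstep]
  rw [diffQuotIntegrand_of_mem hxG, Finset.sum_congr rfl hterm,
    ← ENNReal.ofReal_sum_of_nonneg (fun j _ => by positivity), ← ENNReal.ofReal_natCast,
    ← ENNReal.ofReal_inv_of_pos (by positivity), ← ENNReal.ofReal_mul (by positivity)]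
  refine ENNReal.ofReal_le_ofReal ?_
  simpa using norm_sub_rpow_div_le_inv_mul_sum (fun j : ℕ => w (x + (j * ε) • n)) hM hq hε

theorem tendsto_diffQuotIntegrand (hG : IsOpen G) (hq : 0 ≤ q) (ht : 0 < t)
    {s : ℕ → ℝ} (hs : Tendsto s atTop (𝓝 t)) {x : E} (hxG : x + t • n ∈ G)
    (hx : Tendsto (fun j => w (x + s j • n)) atTop (𝓝 (w (x + t • n)))) :
    Tendsto (fun j => diffQuotIntegrand G w q (s j) n x) atTop
      (𝓝 (diffQuotIntegrand G w q t n x)) := by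
  have hmem : ∀ᶠ j in atTop, x + s j • n ∈ G :=
    ((tendsto_const_nhds.add (hs.smul_const n)).eventually_mem (hG.mem_nhds hxG))
  rw [diffQuotIntegrand_of_mem hxG]
  refine Tendsto.congr' (hmem.mono fun j hj => (diffQuotIntegrand_of_mem hj).symm) ?_
  refine ENNReal.tendsto_ofReal (Tendsto.div ?_ (hs.rpow_const (Or.inr hq)) ?_)
  · exact ((hx.sub tendsto_const_nhds).norm).rpow_const (Or.inr hq)
  · exact (Real.rpow_pos_of_pos ht q).ne'

variable [MeasurableSpace E]

noncomputable def diffQuotIntegral (μ : Measure E) (S : Set E) (w : E → F) (q ε : ℝ) (n : E) :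
    ℝ≥0∞ :=
  ∫⁻ x in S, diffQuotIntegrand S w q ε n x ∂μ

variable [BorelSpace E] {μ : Measure E}

theorem measurable_diffQuotIntegrand_uncurry [SecondCountableTopology E]
    (hS : MeasurableSet S) (hw : StronglyMeasurable w) :
    Measurable (Function.uncurry fun n x => diffQuotIntegrand S w q ε n x) := by
  have hshift : Measurable fun p : E × E => p.2 + ε • p.1 := by fun_prop
  refine ((measurable_one.indicator hS).comp hshift).mul
    (ENNReal.measurable_ofReal.comp ?_)
  exact ((((hw.comp_measurable hshift).sub (hw.comp_measurable measurable_snd)).norm).measurable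
    |>.pow_const q).div_const _

theorem measurable_diffQuotIntegral [SecondCountableTopology E] [SFinite μ]
    (hS : MeasurableSet S) (hw : StronglyMeasurable w) :
    Measurable fun n => diffQuotIntegral μ S w q ε n :=
  (measurable_diffQuotIntegrand_uncurry hS hw).lintegral_prod_right'

theorem diffQuotIntegral_congr_ae [μ.IsAddRightInvariant] (hΩ : MeasurableSet Ω)
    (hS : MeasurableSet S) (hSΩ : S ⊆ Ω) (huw : u =ᵐ[μ.restrict Ω] w) :
    diffQuotIntegral μ S u q ε n = diffQuotIntegral μ S w q ε n := by
  have huw' : ∀ᵐ y ∂μ, y ∈ Ω → u y = w y := (ae_restrict_iff' hΩ).1 huw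
  have hshift : ∀ᵐ x ∂μ, x + ε • n ∈ Ω → u (x + ε • n) = w (x + ε • n) :=
    (measurePreserving_add_right μ (ε • n)).quasiMeasurePreserving.ae huw'
  refine lintegral_congr_ae ?_
  filter_upwards [ae_restrict_mem hS, ae_restrict_of_ae huw', ae_restrict_of_ae hshift]
    with x hx hux hux'
  by_cases hxε : x + ε • n ∈ S
  · rw [diffQuotIntegrand_of_mem hxε, diffQuotIntegrand_of_mem hxε, hux (hSΩ hx),
      hux' (hSΩ hxε)]
  · rw [diffQuotIntegrand_of_notMem hxε, diffQuotIntegrand_of_notMem hxε]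

theorem diffQuotIntegral_natCast_mul_le [SecondCountableTopology E] [μ.IsAddRightInvariant]
    (hΩ : MeasurableSet Ω) (hG : MeasurableSet G) (hw : StronglyMeasurable w)
    {M : ℕ} (hM : M ≠ 0) (hq : 1 ≤ q) (hε : 0 < ε)
    (hseg : ∀ x ∈ G, x + (M * ε) • n ∈ G → ∀ r ∈ Icc 0 (M * ε), x + r • n ∈ Ω) :
    diffQuotIntegral μ G w q (M * ε) n ≤ diffQuotIntegral μ Ω w q ε n := by
  set f := Ω.indicator (diffQuotIntegrand Ω w q ε n)
  have hf : Measurable f :=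
    ((measurable_diffQuotIntegrand_uncurry hΩ hw).comp measurable_prodMk_left).indicator hΩ
  calc diffQuotIntegral μ G w q (M * ε) n
      ≤ ∫⁻ x in G, (M : ℝ≥0∞)⁻¹ * ∑ j ∈ Finset.range M, f (x + (j * ε) • n) ∂μ :=
        setLIntegral_mono' hG fun x hx =>
          diffQuotIntegrand_natCast_mul_le hM hq hε (hseg x hx)
    _ ≤ ∫⁻ x, (M : ℝ≥0∞)⁻¹ * ∑ j ∈ Finset.range M, f (x + (j * ε) • n) ∂μ :=
        setLIntegral_le_lintegral _ _
    _ = (M : ℝ≥0∞)⁻¹ * ∑ j ∈ Finset.range M, ∫⁻ x, f x ∂μ := by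
        rw [lintegral_const_mul' _ _ (ENNReal.inv_ne_top.2 (Nat.cast_ne_zero.2 hM)),
          lintegral_finsetSum' _ (f := fun (j : ℕ) x => f (x + (j * ε) • n))
            fun j _ => (hf.comp (measurable_add_const _)).aemeasurable]
        simp_rw [lintegral_add_right_eq_self f]
    _ = diffQuotIntegral μ Ω w q ε n := by
        rw [Finset.sum_const, Finset.card_range, nsmul_eq_mul,
          ENNReal.inv_mul_cancel_left (Nat.cast_ne_zero.2 hM) (ENNReal.natCast_ne_top M),
          lintegral_indicator hΩ, diffQuotIntegral]

theorem diffQuotIntegral_le_liminf_of_ae_tendsto [SecondCountableTopology E] (hG : IsOpen G)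
    (hw : StronglyMeasurable w) (hq : 0 ≤ q) (ht : 0 < t) {s : ℕ → ℝ}
    (hs : Tendsto s atTop (𝓝 t))
    (hae : ∀ᵐ x ∂μ, Tendsto (fun j => w (x + s j • n)) atTop (𝓝 (w (x + t • n)))) :
    diffQuotIntegral μ G w q t n ≤ liminf (fun j => diffQuotIntegral μ G w q (s j) n) atTop := by
  have hpoint : ∀ᵐ x ∂μ.restrict G, diffQuotIntegrand G w q t n x ≤
      liminf (fun j => diffQuotIntegrand G w q (s j) n x) atTop := by
    filter_upwards [ae_restrict_of_ae hae] with x hx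
    by_cases hxG : x + t • n ∈ G
    · exact (tendsto_diffQuotIntegrand hG hq ht hs hxG hx).liminf_eq.ge
    · rw [diffQuotIntegrand_of_notMem hxG]
      exact zero_le
  calc diffQuotIntegral μ G w q t n
      ≤ ∫⁻ x in G, liminf (fun j => diffQuotIntegrand G w q (s j) n x) atTop ∂μ :=
        lintegral_mono_ae hpoint
    _ ≤ _ := lintegral_liminf_le' fun j =>
        ((measurable_diffQuotIntegrand_uncurry hG.measurableSet hw).comp
          measurable_prodMk_left).aemeasurable

theorem diffQuotIntegral_le_liminf_nhdsGT [FiniteDimensional ℝ E] [μ.IsAddHaarMeasure]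
    (hΩ : MeasurableSet Ω) (hG : IsOpen G) (hw : StronglyMeasurable w)
    (hwq : MemLp w (ENNReal.ofReal q) μ) (hq : 1 ≤ q) (ht : 0 < t)
    (hseg : ∀ s ∈ Ioc 0 t, ∀ x ∈ G, x + s • n ∈ G → ∀ r ∈ Icc 0 s, x + r • n ∈ Ω) :
    diffQuotIntegral μ G w q t n ≤ liminf (fun ε => diffQuotIntegral μ Ω w q ε n) (𝓝[>] 0) := by
  refine le_liminf_of_forall_exists_subseq fun ε hε => ?_
  have hσ : Tendsto (fun k => (⌊t / ε k⌋₊ : ℝ) * ε k) atTop (𝓝 t) :=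
    (tendsto_natFloor_div_mul_nhdsGT ht.le).comp hε
  have : Fact (1 ≤ ENNReal.ofReal q) := ⟨ENNReal.one_le_ofReal.2 hq⟩
  obtain ⟨ρ, hρ, hae⟩ := hwq.exists_subseq_ae_tendsto_comp_add ENNReal.ofReal_ne_top
    (hσ.smul_const n)
  refine ⟨ρ, hρ, ?_⟩
  have hchain : ∀ᶠ j in atTop, diffQuotIntegral μ G w q (⌊t / ε (ρ j)⌋₊ * ε (ρ j)) n ≤
      diffQuotIntegral μ Ω w q (ε (ρ j)) n := by
    filter_upwards [(hε.comp hρ.tendsto_atTop).eventually (Ioc_mem_nhdsGT ht)]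
      with j ⟨hε₀, hεt⟩
    have hM : 1 ≤ ⌊t / ε (ρ j)⌋₊ :=
      Nat.le_floor (by rw [Nat.cast_one]; exact (one_le_div hε₀).2 hεt)
    refine diffQuotIntegral_natCast_mul_le hΩ hG.measurableSet hw (by omega) hq hε₀
      (hseg _ ⟨by positivity, ?_⟩)
    exact (le_div_iff₀ hε₀).1 (Nat.floor_le (by positivity))
  calc diffQuotIntegral μ G w q t n
      ≤ liminf (fun j => diffQuotIntegral μ G w q (⌊t / ε (ρ j)⌋₊ * ε (ρ j)) n) atTop :=
        diffQuotIntegral_le_liminf_of_ae_tendsto hG hw (by linarith) ht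
          (hσ.comp hρ.tendsto_atTop) hae
    _ ≤ liminf (fun j => diffQuotIntegral μ Ω w q (ε (ρ j)) n) atTop :=
        liminf_le_liminf hchain

end DiffQuot

theorem stmt_11_general (N m : ℕ) (Ω : Set (EuclideanSpace ℝ (Fin N))) (hΩopen : IsOpen Ω)
    (q : ℝ) (hq : 1 ≤ q)
    (u : EuclideanSpace ℝ (Fin N) → EuclideanSpace ℝ (Fin m))
    (hu : MemLp u (ENNReal.ofReal q) (volume.restrict Ω))
    (t : ℝ) (ht : 0 < t)
    (G : Set (EuclideanSpace ℝ (Fin N))) (hGopen : IsOpen G) (hGΩ : G ⊆ Ω)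
    (hG : (ENNReal.ofReal t < ⨅ x ∈ G, EMetric.infEdist x Ωᶜ) ∨ Convex ℝ G) :
    (∫⁻ n in sphere (0 : EuclideanSpace ℝ (Fin N)) 1,
        (∫⁻ x in G,
          (G.indicator (fun _ => (1 : ℝ≥0∞)) (x + t • n)) *
            ENNReal.ofReal (‖u (x + t • n) - u x‖ ^ q / t ^ q))
        ∂(μH[(N : ℝ) - 1])) ≤
      Filter.liminf
        (fun ε : ℝ =>
          ∫⁻ n in sphere (0 : EuclideanSpace ℝ (Fin N)) 1,
            (∫⁻ x in Ω,
              (Ω.indicator (fun _ => (1 : ℝ≥0∞)) (x + ε • n)) *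
                ENNReal.ofReal (‖u (x + ε • n) - u x‖ ^ q / ε ^ q))
            ∂(μH[(N : ℝ) - 1]))
        (𝓝[>] (0 : ℝ)) := by
  have hΩ := hΩopen.measurableSet
  set w := Ω.indicator (hu.1.mk u)
  have hw : StronglyMeasurable w := hu.1.stronglyMeasurable_mk.indicator hΩ
  have hwq : MemLp w (ENNReal.ofReal q) volume :=
    (memLp_indicator_iff_restrict hΩ).2 ((memLp_congr_ae hu.1.ae_eq_mk).1 hu)
  have huw : u =ᵐ[volume.restrict Ω] w := hu.1.ae_eq_mk.trans (indicator_ae_eq_restrict hΩ).symm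
  have hseg : ∀ n ∈ sphere (0 : EuclideanSpace ℝ (Fin N)) 1, ∀ s ∈ Ioc 0 t, ∀ x ∈ G,
      x + s • n ∈ G → ∀ r ∈ Icc 0 s, x + r • n ∈ Ω := by
    intro n hn s hs x hx hxs r hr
    rcases hG with hdist | hconv
    · refine add_mem_of_norm_le_of_lt_iInf_infEdist hdist hx ?_
      rw [norm_smul, mem_sphere_zero_iff_norm.1 hn, mul_one, Real.norm_of_nonneg hr.1]
      exact hr.2.trans hs.2
    · exact hGΩ (hconv.add_smul_mem_of_mem_Icc hs.1 hx hxs hr)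
  change ∫⁻ n in _, diffQuotIntegral volume G u q t n ∂_ ≤
    liminf (fun ε => ∫⁻ n in _, diffQuotIntegral volume Ω u q ε n ∂_) _
  simp_rw [diffQuotIntegral_congr_ae hΩ hGopen.measurableSet hGΩ huw,
    diffQuotIntegral_congr_ae hΩ hΩ subset_rfl huw]
  calc ∫⁻ n in _, diffQuotIntegral volume G w q t n ∂_
      ≤ ∫⁻ n in _, liminf (fun ε => diffQuotIntegral volume Ω w q ε n) (𝓝[>] 0) ∂_ :=
        setLIntegral_mono' isClosed_sphere.measurableSet fun n hn =>
          diffQuotIntegral_le_liminf_nhdsGT hΩ hGopen hw hwq hq ht (hseg n hn)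
    _ ≤ _ := lintegral_liminf_le' fun ε => (measurable_diffQuotIntegral hΩ hw).aemeasurable

/-- for `G ⊆ Ω` open with negligible boundary, which is either convex or
at distance `> t` from `ℝ^N ∖ Ω`, the spherical difference quotient of `u` at the fixed
scale `t` over `G` is bounded by the liminf as `ε → 0⁺` of the spherical difference
quotients over `Ω`. -/
theorem stmt_11 (N m : ℕ) (Ω : Set (EuclideanSpace ℝ (Fin N))) (hΩopen : IsOpen Ω)
    (q : ℝ) (hq : 1 ≤ q)
    (u : EuclideanSpace ℝ (Fin N) → EuclideanSpace ℝ (Fin m))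
    (hu : MemLp u (ENNReal.ofReal q) (volume.restrict Ω))
    (t : ℝ) (ht : 0 < t)
    (G : Set (EuclideanSpace ℝ (Fin N))) (hGopen : IsOpen G) (hGΩ : G ⊆ Ω)
    (hGbdry : volume (frontier G) = 0)
    (hG : (ENNReal.ofReal t < ⨅ x ∈ G, EMetric.infEdist x Ωᶜ) ∨ Convex ℝ G) :
    (∫⁻ n in sphere (0 : EuclideanSpace ℝ (Fin N)) 1,
        (∫⁻ x in G,
          (G.indicator (fun _ => (1 : ℝ≥0∞)) (x + t • n)) *
            ENNReal.ofReal (‖u (x + t • n) - u x‖ ^ q / t ^ q))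
        ∂(μH[(N : ℝ) - 1])) ≤
      Filter.liminf
        (fun ε : ℝ =>
          ∫⁻ n in sphere (0 : EuclideanSpace ℝ (Fin N)) 1,
            (∫⁻ x in Ω,
              (Ω.indicator (fun _ => (1 : ℝ≥0∞)) (x + ε • n)) *
                ENNReal.ofReal (‖u (x + ε • n) - u x‖ ^ q / ε ^ q))
            ∂(μH[(N : ℝ) - 1]))
        (𝓝[>] (0 : ℝ)) :=
  stmt_11_general N m Ω hΩopen q hq u hu t ht G hGopen hGΩ hG
end

section
/- Let Ω ⊂ ℝ^N be a convex open domain with L^N(∂Ω) = 0, q ≥ 1, and u ∈ L^q(Ω, ℝ^m). Then sup_{ε ∈ (0,∞)} ∫_{S^{N-1}} ∫_Ω |u(x+εn)−u(x)|^q/ε^q · χ_Ω(x+εn) dx dH^{N-1}(n) = lim_{ε→0⁺} ∫_{S^{N-1}} ∫_Ω |u(x+εn)−u(x)|^q/ε^q · χ_Ω(x+εn) dx dH^{N-1}(n); in particular the limit as ε → 0⁺ exists in [0,+∞]. -/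
open MeasureTheory Metric Set Filter ENNReal
open scoped Topology

/-!
For a direction `n` write `φₙ(t)` for the `L^q` norm of `u(· + t n) - u` over
`{x ∈ Ω | x + t n ∈ Ω}`, so the quantity in question is `∫ (φₙ(ε) / ε)^q dH^{N-1}(n)`.
Convexity of `Ω` makes `t ↦ φₙ(t)` subadditive on `[0, ∞)`, and writing `δ = k ε + r` with
`k = ⌊δ / ε⌋` gives `φₙ(δ) / δ ≤ φₙ(ε) / ε + φₙ(r) / δ`. Continuity of translations in `L^q`
(applied to `u` extended by zero) makes `φₙ(r)` small uniformly in `n` as `r → 0`, and the unit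
sphere has finite `H^{N-1}`-measure (it is covered by the radial projections of the `2N` faces of
the cube `[-1, 1]^N`). Hence the quantity at any `δ > 0` is at most its `liminf` as `ε → 0⁺`,
so the limit exists and equals the supremum.
-/

namespace ENNReal

theorem add_rpow_le_of_weights {q : ℝ} (hq : 1 ≤ q) {w₁ w₂ : ℝ≥0∞} (h₁ : w₁ ≠ 0)
    (h₂ : w₂ ≠ 0) (hw : w₁ + w₂ = 1) (a b : ℝ≥0∞) :
    (a + b) ^ q ≤ w₁ ^ (1 - q) * a ^ q + w₂ ^ (1 - q) * b ^ q := by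
  have hw_top {w w' : ℝ≥0∞} (h : w + w' = 1) : w ≠ ⊤ :=
    ne_top_of_le_ne_top one_ne_top (h ▸ le_self_add)
  have hterm {w : ℝ≥0∞} (h0 : w ≠ 0) (ht : w ≠ ⊤) (z : ℝ≥0∞) :
      w * (z / w) ^ q = w ^ (1 - q) * z ^ q := by
    rw [div_rpow_of_nonneg _ _ (by linarith), rpow_sub _ _ h0 ht, rpow_one, div_eq_mul_inv,
      div_eq_mul_inv]
    ring
  have ht₁ := hw_top hw
  have ht₂ := hw_top ((add_comm w₂ w₁).trans hw)
  calc (a + b) ^ q = (w₁ * (a / w₁) + w₂ * (b / w₂)) ^ q := by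
        rw [ENNReal.mul_div_cancel h₁ ht₁, ENNReal.mul_div_cancel h₂ ht₂]
    _ ≤ w₁ * (a / w₁) ^ q + w₂ * (b / w₂) ^ q := rpow_arith_mean_le_arith_mean2_rpow _ _ _ _ hw hq
    _ = _ := by rw [hterm h₁ ht₁, hterm h₂ ht₂]

end ENNReal

section Subadditive

theorem sub_natFloor_div_mul_mem_Ico {δ ε : ℝ} (hδ : 0 ≤ δ) (hε : 0 < ε) :
    δ - ⌊δ / ε⌋₊ * ε ∈ Ico 0 ε := by
  have hle := (le_div_iff₀ hε).1 (Nat.floor_le (div_nonneg hδ hε.le))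
  have hlt := (div_lt_iff₀ hε).1 (Nat.lt_floor_add_one (δ / ε))
  constructor <;> linarith

variable {f : ℝ → ℝ≥0∞}

theorem le_nat_mul_add_of_subadditive (hf : ∀ a b, 0 ≤ a → 0 ≤ b → f (a + b) ≤ f a + f b)
    (k : ℕ) {ε r : ℝ} (hε : 0 ≤ ε) (hr : 0 ≤ r) : f (k * ε + r) ≤ k * f ε + f r := by
  induction k with
  | zero => simp
  | succ k ih =>
    calc f ((k + 1 : ℕ) * ε + r) = f (ε + (k * ε + r)) := by push_cast; ring_nf
      _ ≤ f ε + (k * f ε + f r) := (hf _ _ hε (by positivity)).trans (by gcongr)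
      _ = (k + 1 : ℕ) * f ε + f r := by push_cast; ring

theorem div_le_div_add_div_of_subadditive (hf : ∀ a b, 0 ≤ a → 0 ≤ b → f (a + b) ≤ f a + f b)
    {ε δ : ℝ} (hε : 0 < ε) (hδ : 0 < δ) :
    f δ / ENNReal.ofReal δ
      ≤ f ε / ENNReal.ofReal ε + f (δ - ⌊δ / ε⌋₊ * ε) / ENNReal.ofReal δ := by
  set k := ⌊δ / ε⌋₊
  have hkε : k * ε ≤ δ := sub_nonneg.1 (sub_natFloor_div_mul_mem_Ico hδ.le hε).1
  have hsplit : f δ ≤ k * f ε + f (δ - k * ε) := by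
    simpa using le_nat_mul_add_of_subadditive hf k hε.le (sub_nonneg.2 hkε)
  have hquot : k * f ε / ENNReal.ofReal δ ≤ f ε / ENNReal.ofReal ε := by
    rcases eq_or_ne k 0 with hk | hk
    · simp [hk]
    have hkε' : (k : ℝ≥0∞) * ENNReal.ofReal ε ≤ ENNReal.ofReal δ := by
      rw [← ENNReal.ofReal_natCast, ← ENNReal.ofReal_mul (by positivity)]
      exact ENNReal.ofReal_le_ofReal hkε
    calc k * f ε / ENNReal.ofReal δ ≤ k * f ε / (k * ENNReal.ofReal ε) :=
          ENNReal.div_le_div_left hkε' _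
      _ = f ε / ENNReal.ofReal ε :=
          ENNReal.mul_div_mul_left _ _ (by exact_mod_cast hk) (ENNReal.natCast_ne_top k)
  calc f δ / ENNReal.ofReal δ ≤ (k * f ε + f (δ - k * ε)) / ENNReal.ofReal δ := by gcongr
    _ = k * f ε / ENNReal.ofReal δ + f (δ - k * ε) / ENNReal.ofReal δ := ENNReal.add_div
    _ ≤ _ := by gcongr

end Subadditive

section DifferenceQuotient

variable {α : Type*} [MeasurableSpace α] {μ : Measure α} {q : ℝ} {f : α → ℝ → ℝ≥0∞}
  {g : ℝ → ℝ≥0∞}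

theorem lintegral_rpow_div_le_liminf_of_subadditive [IsFiniteMeasure μ] (hq : 1 ≤ q)
    (hsub : ∀ᵐ x ∂μ, ∀ a b, 0 ≤ a → 0 ≤ b → f x (a + b) ≤ f x a + f x b)
    (hfg : ∀ᵐ x ∂μ, ∀ t, 0 ≤ t → f x t ≤ g t) (hg : Tendsto g (𝓝[≥] 0) (𝓝 0))
    {δ : ℝ} (hδ : 0 < δ) :
    ∫⁻ x, (f x δ / ENNReal.ofReal δ) ^ q ∂μ
      ≤ liminf (fun ε => ∫⁻ x, (f x ε / ENNReal.ofReal ε) ^ q ∂μ) (𝓝[>] 0) := by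
  set G := fun ε : ℝ => ∫⁻ x, (f x ε / ENNReal.ofReal ε) ^ q ∂μ
  set r := fun ε : ℝ => δ - ⌊δ / ε⌋₊ * ε
  have hr : Tendsto r (𝓝[>] 0) (𝓝[≥] 0) := by
    have hr_mem : ∀ᶠ ε in 𝓝[>] 0, r ε ∈ Ico 0 ε :=
      eventually_nhdsWithin_of_forall fun ε hε => sub_natFloor_div_mul_mem_Ico hδ.le hε
    refine tendsto_nhdsWithin_iff.2 ⟨?_, hr_mem.mono fun ε h => h.1⟩
    exact tendsto_of_tendsto_of_tendsto_of_le_of_le' tendsto_const_nhds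
      (tendsto_nhdsWithin_of_tendsto_nhds tendsto_id) (hr_mem.mono fun ε h => h.1)
      (hr_mem.mono fun ε h => h.2.le)
  -- `x ↦ f x ε` need not be measurable, so Minkowski's inequality in `L^q(μ)` is unavailable;
  -- the weighted bound `ENNReal.add_rpow_le_of_weights` with weight `w → 1` replaces it.
  have hweighted : ∀ w : ℝ≥0∞, 0 < w → w < 1 → G δ ≤ w ^ (1 - q) * liminf G (𝓝[>] 0) := by
    intro w hw0 hw1
    set E := fun ε => (1 - w) ^ (1 - q) * (g (r ε) / ENNReal.ofReal δ) ^ q * μ univ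
    have hw'0 : 1 - w ≠ 0 := (tsub_pos_of_lt hw1).ne'
    have hE : Tendsto E (𝓝[>] 0) (𝓝 0) := by
      have hdiv : Tendsto (fun ε => g (r ε) / ENNReal.ofReal δ) (𝓝[>] 0) (𝓝 0) := by
        simpa using ENNReal.Tendsto.div_const (hg.comp hr) (Or.inr (ENNReal.ofReal_pos.2 hδ).ne')
      have hpow : Tendsto (fun ε => (g (r ε) / ENNReal.ofReal δ) ^ q) (𝓝[>] 0) (𝓝 0) := by
        simpa [Function.comp_def, ENNReal.zero_rpow_of_pos (by linarith : 0 < q)] using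
          ((ENNReal.continuous_rpow_const (y := q)).tendsto 0).comp hdiv
      simpa using ENNReal.Tendsto.mul_const (ENNReal.Tendsto.const_mul hpow
        (Or.inr (rpow_ne_top_of_ne_zero hw'0 (by simp)))) (Or.inr (measure_ne_top μ univ))
    have hbound : ∀ ε > 0, G δ ≤ w ^ (1 - q) * G ε + E ε := by
      intro ε hε
      have hpt : ∀ᵐ x ∂μ, (f x δ / ENNReal.ofReal δ) ^ q
          ≤ w ^ (1 - q) * (f x ε / ENNReal.ofReal ε) ^ q
            + (1 - w) ^ (1 - q) * (g (r ε) / ENNReal.ofReal δ) ^ q := by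
        filter_upwards [hsub, hfg] with x hx hxg
        calc (f x δ / ENNReal.ofReal δ) ^ q
            ≤ (f x ε / ENNReal.ofReal ε + g (r ε) / ENNReal.ofReal δ) ^ q := by
              gcongr
              exact (div_le_div_add_div_of_subadditive hx hε hδ).trans
                (by gcongr; exact hxg _ (sub_natFloor_div_mul_mem_Ico hδ.le hε).1)
          _ ≤ _ := ENNReal.add_rpow_le_of_weights hq hw0.ne' hw'0
              (add_tsub_cancel_of_le hw1.le) _ _
      calc G δ ≤ ∫⁻ x, w ^ (1 - q) * (f x ε / ENNReal.ofReal ε) ^ q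
            + (1 - w) ^ (1 - q) * (g (r ε) / ENNReal.ofReal δ) ^ q ∂μ := lintegral_mono_ae hpt
        _ = w ^ (1 - q) * G ε + E ε := by
          rw [lintegral_add_right _ measurable_const, lintegral_const_mul'
            _ _ (rpow_ne_top_of_ne_zero hw0.ne' (ne_top_of_lt hw1)), lintegral_const]
    calc G δ ≤ liminf (fun ε => w ^ (1 - q) * G ε + E ε) (𝓝[>] 0) :=
          le_liminf_of_le (by isBoundedDefault) (eventually_nhdsWithin_of_forall hbound)
      _ = liminf (fun ε => w ^ (1 - q) * G ε) (𝓝[>] 0) :=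
          ENNReal.liminf_add_of_right_tendsto_zero hE _
      _ = w ^ (1 - q) * liminf G (𝓝[>] 0) :=
          ENNReal.liminf_const_mul_of_ne_top (rpow_ne_top_of_ne_zero hw0.ne' (ne_top_of_lt hw1))
  have hlim : Tendsto (fun w : ℝ≥0∞ => w ^ (1 - q) * liminf G (𝓝[>] 0)) (𝓝[<] 1)
      (𝓝 (liminf G (𝓝[>] 0))) := by
    simpa using ENNReal.Tendsto.mul_const
      ((ENNReal.continuous_rpow_const.tendsto 1).mono_left nhdsWithin_le_nhds)
      (Or.inl (by simp : (1 : ℝ≥0∞) ^ (1 - q) ≠ 0))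
  exact ge_of_tendsto hlim (by
    filter_upwards [Ioo_mem_nhdsLT zero_lt_one] with w hw using hweighted w hw.1 hw.2)

theorem tendsto_lintegral_rpow_div_of_subadditive [IsFiniteMeasure μ] (hq : 1 ≤ q)
    (hsub : ∀ᵐ x ∂μ, ∀ a b, 0 ≤ a → 0 ≤ b → f x (a + b) ≤ f x a + f x b)
    (hfg : ∀ᵐ x ∂μ, ∀ t, 0 ≤ t → f x t ≤ g t) (hg : Tendsto g (𝓝[≥] 0) (𝓝 0)) :
    Tendsto (fun ε => ∫⁻ x, (f x ε / ENNReal.ofReal ε) ^ q ∂μ) (𝓝[>] 0)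
      (𝓝 (⨆ δ ∈ Ioi 0, ∫⁻ x, (f x δ / ENNReal.ofReal δ) ^ q ∂μ)) :=
  tendsto_of_le_liminf_of_limsup_le
    (iSup₂_le fun _ hδ => lintegral_rpow_div_le_liminf_of_subadditive hq hsub hfg hg hδ)
    (limsup_le_of_le (by isBoundedDefault)
      (eventually_nhdsWithin_of_forall fun _ hε =>
        le_biSup (fun δ => ∫⁻ x, (f x δ / ENNReal.ofReal δ) ^ q ∂μ) hε))

end DifferenceQuotient

theorem tendsto_iSup_closedBall_of_tendsto {X : Type*} [PseudoMetricSpace X] {x₀ : X}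
    {T : X → ℝ≥0∞} (hT : Tendsto T (𝓝 x₀) (𝓝 0)) :
    Tendsto (fun t : ℝ => ⨆ v ∈ closedBall x₀ t, T v) (𝓝 0) (𝓝 0) := by
  rw [ENNReal.tendsto_nhds_zero] at hT ⊢
  intro η hη
  obtain ⟨ρ, hρ, hTρ⟩ := Metric.eventually_nhds_iff.1 (hT η hη)
  filter_upwards [gt_mem_nhds hρ] with t ht
  exact iSup₂_le fun v hv => hTρ ((mem_closedBall.1 hv).trans_lt ht)

theorem Convex.add_smul_mem_of_add_add_smul_mem {E : Type*} [AddCommGroup E] [Module ℝ E]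
    {Ω : Set E} (hΩ : Convex ℝ Ω) {x v : E} {a b : ℝ} (ha : 0 ≤ a) (hb : 0 ≤ b)
    (hx : x ∈ Ω) (hxv : x + (a + b) • v ∈ Ω) : x + a • v ∈ Ω := by
  rcases (add_nonneg ha hb).eq_or_lt with hab | hab
  · simpa [show a = 0 by linarith] using hx
  have hmem := hΩ.add_smul_mem hx hxv (t := a / (a + b))
    ⟨div_nonneg ha hab.le, (div_le_one hab).2 (by linarith)⟩
  rwa [smul_smul, div_mul_cancel₀ _ hab.ne'] at hmem

section IncrementLpNorm

variable {E F : Type*} [NormedAddCommGroup E] [MeasurableSpace E] [NormedAddCommGroup F]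
  {μ : Measure E} {Ω : Set E} {u : E → F} {p : ℝ≥0∞}

noncomputable def incrementLpNorm (Ω : Set E) (u : E → F) (p : ℝ≥0∞) (μ : Measure E) (v : E) :
    ℝ≥0∞ :=
  eLpNorm (fun x => u (x + v) - u x) p (μ.restrict (Ω ∩ (· + v) ⁻¹' Ω))

theorem measurableSet_inter_preimage_add [MeasurableAdd E] (hΩ : MeasurableSet Ω) (v : E) :
    MeasurableSet (Ω ∩ (· + v) ⁻¹' Ω) :=
  hΩ.inter (measurable_add_const v hΩ)

theorem incrementLpNorm_indicator [MeasurableAdd E] (hΩ : MeasurableSet Ω) (v : E) :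
    incrementLpNorm Ω (Ω.indicator u) p μ v = incrementLpNorm Ω u p μ v := by
  refine eLpNorm_congr_ae ((ae_restrict_mem (measurableSet_inter_preimage_add hΩ v)).mono ?_)
  rintro x ⟨hx, hxv⟩
  simp [indicator_of_mem hx, indicator_of_mem (show x + v ∈ Ω from hxv)]

theorem incrementLpNorm_le_eLpNorm (v : E) :
    incrementLpNorm Ω u p μ v ≤ eLpNorm (fun x => u (x + v) - u x) p μ :=
  eLpNorm_mono_measure _ Measure.restrict_le_self

theorem incrementLpNorm_rpow {q : ℝ} (hq : 0 < q) (v : E) :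
    incrementLpNorm Ω u (ENNReal.ofReal q) μ v ^ q
      = ∫⁻ x in Ω ∩ (· + v) ⁻¹' Ω, ‖u (x + v) - u x‖ₑ ^ q ∂μ := by
  rw [incrementLpNorm, eLpNorm_eq_eLpNorm' (by simpa using hq) ofReal_ne_top,
    toReal_ofReal hq.le, lintegral_rpow_enorm_eq_rpow_eLpNorm' hq]

theorem lintegral_indicator_mul_ofReal_rpow_div [MeasurableAdd E] {q ε : ℝ} (hΩ : MeasurableSet Ω)
    (hq : 0 < q) (hε : 0 < ε) (v : E) :
    ∫⁻ x in Ω, Ω.indicator (fun _ => (1 : ℝ≥0∞)) (x + v) *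
        ENNReal.ofReal (‖u (x + v) - u x‖ ^ q / ε ^ q) ∂μ
      = (incrementLpNorm Ω u (ENNReal.ofReal q) μ v / ENNReal.ofReal ε) ^ q := by
  have hεq : ENNReal.ofReal ε ^ q ≠ 0 := by simp [hε]
  rw [div_rpow_of_nonneg _ _ hq.le, incrementLpNorm_rpow hq, div_eq_mul_inv,
    ← lintegral_mul_const' _ _ (by simpa using hεq), inter_comm,
    ← Measure.restrict_restrict (measurable_add_const v hΩ), ← lintegral_indicator
    (measurable_add_const v hΩ)]
  refine lintegral_congr fun x => ?_
  by_cases hx : x + v ∈ Ω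
  · rw [indicator_of_mem hx, indicator_of_mem (show x ∈ (· + v) ⁻¹' Ω from hx), one_mul,
      ENNReal.ofReal_div_of_pos (by positivity), ← ofReal_rpow_of_pos hε,
      ← ofReal_rpow_of_nonneg (norm_nonneg _) hq.le, ofReal_norm, div_eq_mul_inv]
  · simp [indicator_of_notMem hx, indicator_of_notMem (show x ∉ (· + v) ⁻¹' Ω from hx)]

theorem incrementLpNorm_add_smul_le [Module ℝ E] [MeasurableAdd E] [μ.IsAddRightInvariant]
    (hΩm : MeasurableSet Ω) (hΩc : Convex ℝ Ω) (hp : 1 ≤ p) (hu : AEStronglyMeasurable u μ)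
    {a b : ℝ} (ha : 0 ≤ a) (hb : 0 ≤ b) (v : E) :
    incrementLpNorm Ω u p μ ((a + b) • v)
      ≤ incrementLpNorm Ω u p μ (a • v) + incrementLpNorm Ω u p μ (b • v) := by
  set A := Ω ∩ (· + (a + b) • v) ⁻¹' Ω
  have hA_left : A ⊆ Ω ∩ (· + a • v) ⁻¹' Ω := fun x hx =>
    ⟨hx.1, hΩc.add_smul_mem_of_add_add_smul_mem ha hb hx.1 hx.2⟩
  have hA_right : A ⊆ (· + a • v) ⁻¹' (Ω ∩ (· + b • v) ⁻¹' Ω) := fun x hx =>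
    ⟨(hA_left hx).2, by simpa [add_assoc, add_smul] using hx.2⟩
  have hshift (w : E) : AEStronglyMeasurable (fun x => u (x + w)) μ :=
    hu.comp_measurePreserving (measurePreserving_add_right μ w)
  have hsecond : eLpNorm (fun x => u (x + a • v + b • v) - u (x + a • v)) p (μ.restrict A)
      ≤ incrementLpNorm Ω u p μ (b • v) := by
    have hD := measurableSet_inter_preimage_add hΩm (b • v)
    calc _ ≤ eLpNorm ((fun y => u (y + b • v) - u y) ∘ (· + a • v)) p
          (μ.restrict ((· + a • v) ⁻¹' (Ω ∩ (· + b • v) ⁻¹' Ω))) :=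
          eLpNorm_mono_measure _ (Measure.restrict_mono hA_right le_rfl)
      _ = incrementLpNorm Ω u p μ (b • v) :=
          eLpNorm_comp_measurePreserving ((hshift _).sub hu).restrict
            ((measurePreserving_add_right μ (a • v)).restrict_preimage hD)
  calc incrementLpNorm Ω u p μ ((a + b) • v)
      = eLpNorm ((fun x => u (x + a • v) - u x) + fun x => u (x + a • v + b • v) - u (x + a • v))
          p (μ.restrict A) := by
        simp only [incrementLpNorm, A, add_smul, ← add_assoc, Pi.add_def, sub_add_sub_cancel']
    _ ≤ eLpNorm (fun x => u (x + a • v) - u x) p (μ.restrict A)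
        + eLpNorm (fun x => u (x + a • v + b • v) - u (x + a • v)) p (μ.restrict A) :=
        eLpNorm_add_le ((hshift _).sub hu).restrict
          (AEStronglyMeasurable.sub (by simpa only [add_assoc] using hshift (a • v + b • v))
            (hshift _)).restrict hp
    _ ≤ _ := add_le_add (eLpNorm_mono_measure _ (Measure.restrict_mono hA_left le_rfl)) hsecond

theorem tendsto_eLpNorm_comp_add_right_sub [BorelSpace E] [μ.IsAddRightInvariant]
    [μ.InnerRegularCompactLTTop] [IsLocallyFiniteMeasure μ] [Fact (1 ≤ p)] (hp : p ≠ ⊤)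
    (hu : MemLp u p μ) :
    Tendsto (fun v => eLpNorm (fun x => u (x + v) - u x) p μ) (𝓝 0) (𝓝 0) := by
  let T : C(E, C(E, E)) := ContinuousMap.curry ⟨fun z : E × E => z.2 + z.1, by fun_prop⟩
  have hT (v : E) : MeasurePreserving (T v) μ μ := measurePreserving_add_right μ v
  set F := fun v => Lp.compMeasurePreserving (T v) (hT v) (hu.toLp u)
  have hF (v : E) : F v =ᵐ[μ] fun x => u (x + v) :=
    (Lp.coeFn_compMeasurePreserving _ _).trans
      ((hT v).quasiMeasurePreserving.ae_eq_comp hu.coeFn_toLp)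
  have hdist (v : E) : eLpNorm (fun x => u (x + v) - u x) p μ = edist (F v) (F 0) := by
    rw [Lp.edist_def]
    refine eLpNorm_congr_ae ?_
    filter_upwards [hF v, hF 0] with x hxv hx0
    simp [hxv, hx0]
  have hcont : Continuous F :=
    continuous_const.compMeasurePreservingLp T.continuous hT hp
  simpa [hdist] using (hcont.tendsto 0).edist (tendsto_const_nhds (x := F 0))

theorem tendsto_lintegral_difference_quotient [NormedSpace ℝ E] [BorelSpace E]
    [μ.IsAddRightInvariant] [μ.InnerRegularCompactLTTop] [IsLocallyFiniteMeasure μ]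
    {ν : Measure E} [IsFiniteMeasure ν] (hν : ∀ᵐ n ∂ν, ‖n‖ ≤ 1) (hΩm : MeasurableSet Ω)
    (hΩc : Convex ℝ Ω) {q : ℝ} (hq : 1 ≤ q) (hu : MemLp u (ENNReal.ofReal q) (μ.restrict Ω)) :
    Tendsto (fun ε : ℝ => ∫⁻ n, ∫⁻ x in Ω, Ω.indicator (fun _ => (1 : ℝ≥0∞)) (x + ε • n) *
        ENNReal.ofReal (‖u (x + ε • n) - u x‖ ^ q / ε ^ q) ∂μ ∂ν) (𝓝[>] 0)
      (𝓝 (⨆ ε ∈ Ioi 0, ∫⁻ n, ∫⁻ x in Ω, Ω.indicator (fun _ => (1 : ℝ≥0∞)) (x + ε • n) *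
        ENNReal.ofReal (‖u (x + ε • n) - u x‖ ^ q / ε ^ q) ∂μ ∂ν)) := by
  have hp : 1 ≤ ENNReal.ofReal q := ENNReal.one_le_ofReal.2 hq
  have : Fact (1 ≤ ENNReal.ofReal q) := ⟨hp⟩
  have hu₀ : MemLp (Ω.indicator u) (ENNReal.ofReal q) μ := (memLp_indicator_iff_restrict hΩm).2 hu
  set f := fun (n : E) (t : ℝ) => incrementLpNorm Ω u (ENNReal.ofReal q) μ (t • n)
  have hsub (n : E) (a b : ℝ) (ha : 0 ≤ a) (hb : 0 ≤ b) : f n (a + b) ≤ f n a + f n b := by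
    simpa only [incrementLpNorm_indicator hΩm] using
      incrementLpNorm_add_smul_le hΩm hΩc hp hu₀.1 ha hb n
  set g := fun t : ℝ => ⨆ v ∈ closedBall (0 : E) t,
    eLpNorm (fun x => Ω.indicator u (x + v) - Ω.indicator u x) (ENNReal.ofReal q) μ
  have hg : Tendsto g (𝓝[≥] 0) (𝓝 0) :=
    (tendsto_iSup_closedBall_of_tendsto
      (tendsto_eLpNorm_comp_add_right_sub ofReal_ne_top hu₀)).mono_left nhdsWithin_le_nhds
  have hfg : ∀ᵐ n ∂ν, ∀ t, 0 ≤ t → f n t ≤ g t := by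
    filter_upwards [hν] with n hn t ht
    simp only [f, ← incrementLpNorm_indicator hΩm (u := u)]
    refine (incrementLpNorm_le_eLpNorm _).trans (le_iSup₂_of_le (t • n) ?_ le_rfl)
    simpa [norm_smul, abs_of_nonneg ht] using mul_le_of_le_one_right ht hn
  have heq : ∀ ε ∈ Ioi (0 : ℝ), ∫⁻ n, ∫⁻ x in Ω, Ω.indicator (fun _ => (1 : ℝ≥0∞)) (x + ε • n) *
      ENNReal.ofReal (‖u (x + ε • n) - u x‖ ^ q / ε ^ q) ∂μ ∂ν
      = ∫⁻ n, (f n ε / ENNReal.ofReal ε) ^ q ∂ν := fun ε hε =>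
    lintegral_congr fun n => lintegral_indicator_mul_ofReal_rpow_div hΩm (by linarith) hε _
  rw [biSup_congr heq]
  exact (tendsto_lintegral_rpow_div_of_subadditive hq (ae_of_all _ hsub) hfg hg).congr'
    (eventually_nhdsWithin_of_forall fun ε hε => (heq ε hε).symm)

end IncrementLpNorm

theorem LocallyLipschitz.hausdorffMeasure_image_lt_top {X Y : Type*} [MetricSpace X]
    [MeasurableSpace X] [BorelSpace X] [MetricSpace Y] [MeasurableSpace Y] [BorelSpace Y]
    {f : X → Y} (hf : LocallyLipschitz f) {K : Set X} (hK : IsCompact K) {d : ℝ} (hd : 0 ≤ d)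
    (hKd : μH[d] K ≠ ⊤) : μH[d] (f '' K) < ⊤ := by
  obtain ⟨C, hC⟩ := hf.locallyLipschitzOn.exists_lipschitzOnWith_of_compact hK
  exact (hC.hausdorffMeasure_image_le hd).trans_lt
    (mul_lt_top (rpow_lt_top_of_nonneg hd coe_ne_top) hKd.lt_top)

theorem contDiff_insertNth {n : ℕ} (i : Fin (n + 1)) (σ : ℝ) :
    ContDiff ℝ ⊤ fun y : Fin n → ℝ => Fin.insertNth (α := fun _ => ℝ) i σ y := by
  refine contDiff_pi.2 fun j => ?_
  rcases Fin.eq_self_or_eq_succAbove i j with rfl | ⟨k, rfl⟩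
  · simpa using contDiff_const
  · simpa using contDiff_apply ℝ ℝ k

noncomputable def sphereChart {n : ℕ} (i : Fin (n + 1)) (σ : ℝ) (y : Fin n → ℝ) :
    EuclideanSpace ℝ (Fin (n + 1)) :=
  let z : EuclideanSpace ℝ (Fin (n + 1)) := WithLp.toLp 2 (Fin.insertNth (α := fun _ => ℝ) i σ y)
  ‖z‖⁻¹ • z

theorem contDiff_sphereChart {n : ℕ} (i : Fin (n + 1)) {σ : ℝ} (hσ : σ ≠ 0) :
    ContDiff ℝ 1 (sphereChart i σ) := by
  set z := fun y : Fin n → ℝ => WithLp.toLp 2 (Fin.insertNth (α := fun _ => ℝ) i σ y)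
  have hz : ContDiff ℝ 1 z := PiLp.contDiff_toLp.comp ((contDiff_insertNth i σ).of_le le_top)
  have hz0 (y : Fin n → ℝ) : z y ≠ 0 := fun h => hσ (by
    simpa [z] using congrArg (fun x : EuclideanSpace ℝ (Fin (n + 1)) => x i) h)
  exact ((hz.norm ℝ hz0).inv fun y => norm_ne_zero_iff.2 (hz0 y)).smul hz

theorem sphere_subset_iUnion_sphereChart (n : ℕ) :
    sphere (0 : EuclideanSpace ℝ (Fin (n + 1))) 1
      ⊆ ⋃ i, ⋃ σ ∈ ({-1, 1} : Set ℝ), sphereChart i σ '' Icc (-1) 1 := by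
  intro x hx
  have hx1 : ‖x‖ = 1 := by simpa using hx
  obtain ⟨i, hi⟩ := Finite.exists_max fun j => |x j|
  have hxi : 0 < |x i| := by
    by_contra! h
    have : x = 0 := by
      ext j; simpa using (hi j).trans h
    simp [this] at hx1
  set z := WithLp.ofLp ((|x i|)⁻¹ • x)
  have hz (j : Fin (n + 1)) : z j = (|x i|)⁻¹ * x j := rfl
  have hzi : z i ∈ ({-1, 1} : Set ℝ) := by
    rcases lt_or_gt_of_ne (abs_pos.1 hxi) with hneg | hpos
    · exact Or.inl (by rw [hz, abs_of_neg hneg, inv_neg, neg_mul, inv_mul_cancel₀ hneg.ne])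
    · exact Or.inr (by rw [hz, abs_of_pos hpos, inv_mul_cancel₀ hpos.ne', mem_singleton_iff])
  refine mem_iUnion.2 ⟨i, mem_iUnion₂.2 ⟨z i, hzi, i.removeNth z, ?_, ?_⟩⟩
  · have hbound (j : Fin (n + 1)) : |z j| ≤ 1 := by
      rw [hz, abs_mul, abs_inv, abs_abs, inv_mul_le_one₀ hxi]
      exact hi j
    exact ⟨fun k => (abs_le.1 (hbound _)).1, fun k => (abs_le.1 (hbound _)).2⟩
  · rw [sphereChart, Fin.insertNth_self_removeNth, WithLp.toLp_ofLp, norm_smul, norm_inv,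
      Real.norm_eq_abs, abs_abs, hx1, mul_one, inv_inv, smul_smul, mul_inv_cancel₀ hxi.ne',
      one_smul]

theorem hausdorffMeasure_sphere_lt_top (N : ℕ) :
    μH[(N : ℝ) - 1] (sphere (0 : EuclideanSpace ℝ (Fin N)) 1) < ⊤ := by
  rcases N with _ | n
  · have : sphere (0 : EuclideanSpace ℝ (Fin 0)) 1 = ∅ := by
      ext x; simp [Subsingleton.elim x 0]
    simp [this]
  have hcube : μH[(n : ℝ)] (Icc (-1) 1 : Set (Fin n → ℝ)) ≠ ⊤ := by
    have h := hausdorffMeasure_pi_real (ι := Fin n)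
    simp only [Fintype.card_fin] at h
    rw [h]
    exact isCompact_Icc.measure_ne_top
  rw [Nat.cast_add_one, add_sub_cancel_right]
  refine (measure_mono (sphere_subset_iUnion_sphereChart n)).trans_lt
    ((measure_iUnion_fintype_le _ _).trans_lt (ENNReal.sum_lt_top.2 fun i _ => ?_))
  refine measure_biUnion_lt_top (toFinite _) fun σ hσ => ?_
  have hσ0 : σ ≠ 0 := by rcases hσ with rfl | rfl <;> norm_num
  exact ((contDiff_sphereChart i hσ0).locallyLipschitz.hausdorffMeasure_image_lt_top
    isCompact_Icc n.cast_nonneg hcube)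

theorem stmt_12_general (N m : ℕ) (Ω : Set (EuclideanSpace ℝ (Fin N)))
    (hΩopen : IsOpen Ω) (hΩconv : Convex ℝ Ω)
    (q : ℝ) (hq : 1 ≤ q)
    (u : EuclideanSpace ℝ (Fin N) → EuclideanSpace ℝ (Fin m))
    (hu : MemLp u (ENNReal.ofReal q) (volume.restrict Ω)) :
    Filter.Tendsto
      (fun ε : ℝ =>
        ∫⁻ n in sphere (0 : EuclideanSpace ℝ (Fin N)) 1,
          (∫⁻ x in Ω,
            (Ω.indicator (fun _ => (1 : ℝ≥0∞)) (x + ε • n)) *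
              ENNReal.ofReal (‖u (x + ε • n) - u x‖ ^ q / ε ^ q))
          ∂(μH[(N : ℝ) - 1]))
      (𝓝[>] (0 : ℝ))
      (nhds
        (⨆ ε ∈ Set.Ioi (0 : ℝ),
          ∫⁻ n in sphere (0 : EuclideanSpace ℝ (Fin N)) 1,
            (∫⁻ x in Ω,
              (Ω.indicator (fun _ => (1 : ℝ≥0∞)) (x + ε • n)) *
                ENNReal.ofReal (‖u (x + ε • n) - u x‖ ^ q / ε ^ q))
            ∂(μH[(N : ℝ) - 1]))) := by
  have : IsFiniteMeasure (μH[(N : ℝ) - 1].restrict (sphere (0 : EuclideanSpace ℝ (Fin N)) 1)) :=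
    isFiniteMeasure_restrict.2 (hausdorffMeasure_sphere_lt_top N).ne
  exact tendsto_lintegral_difference_quotient
    (ae_restrict_of_forall_mem isClosed_sphere.measurableSet fun n hn =>
      (mem_sphere_zero_iff_norm.1 hn).le)
    hΩopen.measurableSet hΩconv hq hu

/-- for a convex open `Ω ⊆ ℝ^N` with negligible boundary and
`u ∈ L^q(Ω,ℝ^m)`, the spherical difference quotients converge as `ε → 0⁺` to their
supremum over all `ε > 0` (the common value may be `+∞`). -/
theorem stmt_12 (N m : ℕ) (Ω : Set (EuclideanSpace ℝ (Fin N)))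
    (hΩopen : IsOpen Ω) (hΩconv : Convex ℝ Ω) (hΩbdry : volume (frontier Ω) = 0)
    (q : ℝ) (hq : 1 ≤ q)
    (u : EuclideanSpace ℝ (Fin N) → EuclideanSpace ℝ (Fin m))
    (hu : MemLp u (ENNReal.ofReal q) (volume.restrict Ω)) :
    Filter.Tendsto
      (fun ε : ℝ =>
        ∫⁻ n in sphere (0 : EuclideanSpace ℝ (Fin N)) 1,
          (∫⁻ x in Ω,
            (Ω.indicator (fun _ => (1 : ℝ≥0∞)) (x + ε • n)) *
              ENNReal.ofReal (‖u (x + ε • n) - u x‖ ^ q / ε ^ q))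
          ∂(μH[(N : ℝ) - 1]))
      (𝓝[>] (0 : ℝ))
      (nhds
        (⨆ ε ∈ Set.Ioi (0 : ℝ),
          ∫⁻ n in sphere (0 : EuclideanSpace ℝ (Fin N)) 1,
            (∫⁻ x in Ω,
              (Ω.indicator (fun _ => (1 : ℝ≥0∞)) (x + ε • n)) *
                ENNReal.ofReal (‖u (x + ε • n) - u x‖ ^ q / ε ^ q))
            ∂(μH[(N : ℝ) - 1]))) :=
  stmt_12_general N m Ω hΩopen hΩconv q hq u hu
end

section
/- Let Ω ⊂ ℝ^N be an open set, q ≥ 1, and u ∈ L^q_loc(Ω, ℝ^m). Then for every open Ω₁ ⊂⊂ Ω₂ ⊂⊂ Ω, every k ∈ S^{N-1}, and every ε with 0 < ε < min{dist(Ω₁, ℝ^N \ Ω₂), dist(Ω₂, ℝ^N \ Ω)}, one has ∫_{cl Ω₁} (1/ε) |u(x+εk)−u(x)|^q dx ≤ (2^{N+q} / L^N(B₁(0))) ∫_{B₁(0)} ∫_{cl Ω₂} (1/(ε|z|)) |u(x+εz)−u(x)|^q dx dz. -/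
open MeasureTheory Metric Set ENNReal

/-!
For `z` in the ball `S = B(k/2, 1/2)`, both `z` and `k - z` lie in `B₁(0) ∖ {0}`, and
`|u(x+εk) - u(x)|^q ≤ 2^{q-1} (|u(x+εk) - u(x+εz)|^q + |u(x+εz) - u(x)|^q)`.
Translating `x` by `εz` turns the first term into a difference in direction `k - z`, and
`z ↦ k - z` preserves `S`; as `|z| < 1`, dividing by `ε` instead of `ε|z|` only makes each term
smaller. Averaging over `S`, whose measure is `2^{-N} L^N(B₁(0))`, gives the constant
`2^{N+q} / L^N(B₁(0))`. Since `u` is only known to be measurable on the compact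
`ε`-neighbourhood of `cl Ω₂`, it is first replaced by a measurable representative there.
-/

lemma norm_sub_rpow_le_two_rpow_mul {F : Type*} [SeminormedAddCommGroup F] (a b c : F) {q : ℝ}
    (hq : 1 ≤ q) : ‖a - c‖ ^ q ≤ 2 ^ (q - 1) * (‖a - b‖ ^ q + ‖b - c‖ ^ q) :=
  calc ‖a - c‖ ^ q ≤ (‖a - b‖ + ‖b - c‖) ^ q := by
        gcongr; exact norm_sub_le_norm_sub_add_norm_sub a b c
    _ ≤ 2 ^ (q - 1) * (‖a - b‖ ^ q + ‖b - c‖ ^ q) := by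
        exact_mod_cast NNReal.rpow_add_le_mul_rpow_add_rpow ‖a - b‖₊ ‖b - c‖₊ hq

lemma lintegral_ofReal_norm_sub_rpow_div_le {α F : Type*} [MeasurableSpace α] {μ : Measure α}
    [NormedAddCommGroup F] {f g h : α → F} (hf : AEStronglyMeasurable f μ)
    (hg : AEStronglyMeasurable g μ) {q d : ℝ} (hq : 1 ≤ q) (hd : 0 ≤ d) :
    ∫⁻ x, ENNReal.ofReal (‖f x - h x‖ ^ q / d) ∂μ ≤
      ENNReal.ofReal (2 ^ (q - 1)) * (∫⁻ x, ENNReal.ofReal (‖f x - g x‖ ^ q / d) ∂μ +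
        ∫⁻ x, ENNReal.ofReal (‖g x - h x‖ ^ q / d) ∂μ) := by
  have hfg : AEMeasurable (fun x => ENNReal.ofReal (‖f x - g x‖ ^ q / d)) μ :=
    (((hf.sub hg).norm.aemeasurable.pow_const q).div_const d).ennreal_ofReal
  rw [← lintegral_add_left' hfg, ← lintegral_const_mul' _ _ ofReal_ne_top]
  refine lintegral_mono fun x => ?_
  rw [← ENNReal.ofReal_add (by positivity) (by positivity), ← ENNReal.ofReal_mul (by positivity),
    ← add_div, ← mul_div_assoc]
  gcongr
  exact norm_sub_rpow_le_two_rpow_mul _ _ _ hq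

lemma ofReal_div_le_ofReal_div_mul {t ε r : ℝ} (ht : 0 ≤ t) (hε : 0 < ε) (hr : 0 < r)
    (hr₁ : r ≤ 1) : ENNReal.ofReal (t / ε) ≤ ENNReal.ofReal (t / (ε * r)) :=
  ENNReal.ofReal_le_ofReal <|
    div_le_div_of_nonneg_left ht (by positivity) (mul_le_of_le_one_right hε.le hr₁)

section BallThroughOrigin

variable {E : Type*} [SeminormedAddCommGroup E] {c z : E}

lemma norm_pos_of_mem_ball_norm (hz : z ∈ ball c ‖c‖) : 0 < ‖z‖ := by
  rw [mem_ball, dist_eq_norm, norm_sub_rev] at hz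
  linarith [norm_sub_norm_le c z]

lemma norm_lt_two_mul_of_mem_ball_norm (hz : z ∈ ball c ‖c‖) : ‖z‖ < 2 * ‖c‖ := by
  rw [mem_ball, dist_eq_norm] at hz
  linarith [norm_le_norm_add_norm_sub' z c]

lemma preimage_sub_left_ball_add_self (c : E) (r : ℝ) :
    (fun z => (c + c) - z) ⁻¹' ball c r = ball c r := by
  ext z
  simp only [mem_preimage, mem_ball, dist_eq_norm]
  rw [show c + c - z - c = -(z - c) by abel, norm_neg]

end BallThroughOrigin

lemma cthickening_subset_of_lt_iInf_infEDist {X : Type*} [PseudoEMetricSpace X] {s t : Set X}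
    {δ : ℝ} (h : ENNReal.ofReal δ < ⨅ x ∈ s, infEDist x tᶜ) : cthickening δ s ⊆ t := by
  intro y hy
  by_contra hyt
  have : ⨅ x ∈ s, infEDist x tᶜ ≤ infEDist y s :=
    le_infEDist.2 fun x hx =>
      (biInf_le _ hx).trans ((infEDist_le_edist_of_mem hyt).trans_eq (edist_comm x y))
  exact (h.trans_le (this.trans hy)).false

lemma add_smul_mem_cthickening {E : Type*} [SeminormedAddCommGroup E] [NormedSpace ℝ E]
    {ε : ℝ} {A : Set E} {x w : E} (hx : x ∈ A) (hε : 0 ≤ ε) (hw : ‖w‖ ≤ 1) :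
    x + ε • w ∈ cthickening ε A :=
  mem_cthickening_of_dist_le _ x ε A hx <| by
    rw [dist_self_add_left, norm_smul, Real.norm_of_nonneg hε]
    exact mul_le_of_le_one_right hε hw

section Translation

variable {G : Type*} [AddGroup G] [MeasurableSpace G] [MeasurableAdd G] (μ : Measure G)
  [μ.IsAddRightInvariant]

lemma setLIntegral_comp_add_right_le {A B : Set G} {c : G} (hAB : ∀ x ∈ A, x + c ∈ B)
    (g : G → ℝ≥0∞) : ∫⁻ x in A, g (x + c) ∂μ ≤ ∫⁻ y in B, g y ∂μ :=
  calc ∫⁻ x in A, g (x + c) ∂μ ≤ ∫⁻ x in (· + c) ⁻¹' B, g (x + c) ∂μ := lintegral_mono_set hAB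
    _ = ∫⁻ y in B, g y ∂μ := (measurePreserving_add_right μ c).setLIntegral_comp_preimage_emb
        (measurableEmbedding_addRight c) g B

lemma ae_restrict_comp_add_right {A K : Set G} (hA : MeasurableSet A) (hK : MeasurableSet K)
    {p : G → Prop} (hp : ∀ᵐ y ∂μ.restrict K, p y) {c : G} (hAK : ∀ x ∈ A, x + c ∈ K) :
    ∀ᵐ x ∂μ.restrict A, p (x + c) := by
  have hp' : ∀ᵐ x ∂μ, x + c ∈ K → p (x + c) :=
    (measurePreserving_add_right μ c).quasiMeasurePreserving.ae ((ae_restrict_iff' hK).1 hp)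
  filter_upwards [ae_restrict_of_ae hp', ae_restrict_mem hA] with x hx hxA using hx (hAK x hxA)

end Translation

section Averaging

open Module

variable {E F : Type*} [NormedAddCommGroup E] [NormedSpace ℝ E] [MeasurableSpace E] [BorelSpace E]
  (μ : Measure E) [NormedAddCommGroup F] {q ε : ℝ}

lemma setLIntegral_norm_shift_sub_shift_le [μ.IsAddRightInvariant] {v : E → F} (hε : 0 < ε)
    {A B : Set E} {a b : E} (hAB : ∀ x ∈ A, x + ε • b ∈ B) (hab : 0 < ‖a - b‖)
    (hab₁ : ‖a - b‖ ≤ 1) :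
    ∫⁻ x in A, ENNReal.ofReal (‖v (x + ε • a) - v (x + ε • b)‖ ^ q / ε) ∂μ ≤
      ∫⁻ y in B, ENNReal.ofReal (‖v (y + ε • (a - b)) - v y‖ ^ q / (ε * ‖a - b‖)) ∂μ :=
  calc ∫⁻ x in A, ENNReal.ofReal (‖v (x + ε • a) - v (x + ε • b)‖ ^ q / ε) ∂μ
      = ∫⁻ x in A, ENNReal.ofReal (‖v (x + ε • b + ε • (a - b)) - v (x + ε • b)‖ ^ q / ε) ∂μ := by
        simp only [smul_sub, add_add_sub_cancel]
    _ ≤ ∫⁻ y in B, ENNReal.ofReal (‖v (y + ε • (a - b)) - v y‖ ^ q / ε) ∂μ :=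
        setLIntegral_comp_add_right_le μ hAB _
    _ ≤ _ := lintegral_mono fun y =>
        ofReal_div_le_ofReal_div_mul (by positivity) hε hab hab₁

lemma measurable_setLIntegral_norm_shift_sub [SecondCountableTopology E] [SFinite μ] {v : E → F}
    (hv : StronglyMeasurable v) (B : Set E) :
    Measurable fun w => ∫⁻ x in B, ENNReal.ofReal (‖v (x + ε • w) - v x‖ ^ q / (ε * ‖w‖)) ∂μ := by
  have hvw : StronglyMeasurable fun p : E × E => v (p.2 + ε • p.1) - v p.2 :=
    (hv.comp_measurable (by fun_prop)).sub (hv.comp_measurable measurable_snd)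
  exact ((hvw.norm.measurable.pow_const q).div
    (measurable_const.mul measurable_fst.norm)).ennreal_ofReal.lintegral_prod_right'

variable [FiniteDimensional ℝ E] [μ.IsAddHaarMeasure]

theorem setLIntegral_norm_shift_sub_le_average_of_stronglyMeasurable {v : E → F}
    (hv : StronglyMeasurable v) (hq : 1 ≤ q) (hε : 0 < ε) {A B : Set E}
    (hAB : cthickening ε A ⊆ B) {k : E} (hk : ‖k‖ = 1) :
    ∫⁻ x in A, ENNReal.ofReal (‖v (x + ε • k) - v x‖ ^ q / ε) ∂μ ≤
      ENNReal.ofReal (2 ^ ((finrank ℝ E : ℝ) + q)) / μ (ball 0 1) *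
        ∫⁻ z in ball 0 1, ∫⁻ x in B,
          ENNReal.ofReal (‖v (x + ε • z) - v x‖ ^ q / (ε * ‖z‖)) ∂μ ∂μ := by
  set L := ∫⁻ x in A, ENNReal.ofReal (‖v (x + ε • k) - v x‖ ^ q / ε) ∂μ
  set J : E → ℝ≥0∞ := fun w =>
    ∫⁻ x in B, ENNReal.ofReal (‖v (x + ε • w) - v x‖ ^ q / (ε * ‖w‖)) ∂μ
  set c : E := (2 : ℝ)⁻¹ • k
  have hc : ‖c‖ = 2⁻¹ := by simp [c, norm_smul, hk]
  have hcc : c + c = k := by simp only [c]; module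
  have hS : ∀ z ∈ ball c ‖c‖, 0 < ‖z‖ ∧ ‖z‖ < 1 := fun z hz =>
    ⟨norm_pos_of_mem_ball_norm hz, by simpa [hc] using norm_lt_two_mul_of_mem_ball_norm hz⟩
  have hreflect : (fun z => k - z) ⁻¹' ball c ‖c‖ = ball c ‖c‖ := by
    rw [← hcc]; exact preimage_sub_left_ball_add_self c _
  have hA : ∀ x ∈ A, ∀ w : E, ‖w‖ ≤ 1 → x + ε • w ∈ B := fun x hx w hw =>
    hAB (add_smul_mem_cthickening hx hε.le hw)
  have hsplit : ∀ z ∈ ball c ‖c‖, L ≤ ENNReal.ofReal (2 ^ (q - 1)) * (J (k - z) + J z) := by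
    intro z hz
    have hkz := hS (k - z) (by rwa [← hreflect] at hz)
    have hzk : ∫⁻ x in A, ENNReal.ofReal (‖v (x + ε • k) - v (x + ε • z)‖ ^ q / ε) ∂μ ≤
        J (k - z) :=
      setLIntegral_norm_shift_sub_shift_le μ hε (fun x hx => hA x hx z (hS z hz).2.le)
        hkz.1 hkz.2.le
    have hz0 := setLIntegral_norm_shift_sub_shift_le μ (v := v) (q := q) hε (a := z) (b := 0)
      (fun x hx => hA x hx 0 (by simp)) (by simpa using (hS z hz).1)
      (by simpa using (hS z hz).2.le)
    simp only [smul_zero, add_zero, sub_zero] at hz0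
    calc L ≤ ENNReal.ofReal (2 ^ (q - 1)) *
          (∫⁻ x in A, ENNReal.ofReal (‖v (x + ε • k) - v (x + ε • z)‖ ^ q / ε) ∂μ +
            ∫⁻ x in A, ENNReal.ofReal (‖v (x + ε • z) - v x‖ ^ q / ε) ∂μ) :=
          lintegral_ofReal_norm_sub_rpow_div_le
            (hv.comp_measurable (measurable_add_const _)).aestronglyMeasurable
            (hv.comp_measurable (measurable_add_const _)).aestronglyMeasurable hq hε.le
      _ ≤ ENNReal.ofReal (2 ^ (q - 1)) * (J (k - z) + J z) := by gcongr
  have hJ : Measurable J := measurable_setLIntegral_norm_shift_sub μ hv B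
  have hJ_reflect : ∫⁻ z in ball c ‖c‖, J (k - z) ∂μ = ∫⁻ z in ball c ‖c‖, J z ∂μ := by
    rw [← (Measure.measurePreserving_sub_left μ k).setLIntegral_comp_preimage_emb
      (MeasurableEquiv.subLeft k).measurableEmbedding J _, hreflect]
  have havg : L * μ (ball c ‖c‖) ≤ ENNReal.ofReal (2 ^ q) * ∫⁻ z in ball 0 1, J z ∂μ :=
    calc L * μ (ball c ‖c‖) = ∫⁻ _ in ball c ‖c‖, L ∂μ := (setLIntegral_const _ L).symm
      _ ≤ ∫⁻ z in ball c ‖c‖, ENNReal.ofReal (2 ^ (q - 1)) * (J (k - z) + J z) ∂μ :=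
          setLIntegral_mono' measurableSet_ball hsplit
      _ = ENNReal.ofReal (2 ^ q) * ∫⁻ z in ball c ‖c‖, J z ∂μ := by
          rw [lintegral_const_mul' _ _ ofReal_ne_top, lintegral_add_right _ hJ, hJ_reflect,
            ← two_mul, ← mul_assoc, ← ENNReal.ofReal_ofNat 2, ← ENNReal.ofReal_mul (by positivity),
            ← Real.rpow_add_one two_ne_zero, sub_add_cancel]
      _ ≤ ENNReal.ofReal (2 ^ q) * ∫⁻ z in ball 0 1, J z ∂μ := by
          gcongr
          exact fun z hz => mem_ball_zero_iff.2 (hS z hz).2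
  have hvol : μ (ball 0 1) = ENNReal.ofReal (2 ^ finrank ℝ E) * μ (ball c ‖c‖) := by
    rw [Measure.addHaar_ball_center μ c, hc, ← Measure.addHaar_ball_mul_of_pos μ 0 two_pos,
      mul_inv_cancel₀ two_ne_zero]
  have hS0 : μ (ball c ‖c‖) ≠ 0 := (measure_ball_pos μ c (by rw [hc]; norm_num)).ne'
  rw [Real.rpow_add two_pos, Real.rpow_natCast, ENNReal.ofReal_mul (by positivity), hvol,
    ENNReal.mul_div_mul_left _ _ (by positivity) ofReal_ne_top, ← ENNReal.mul_div_right_comm,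
    ENNReal.le_div_iff_mul_le (.inl hS0) (.inl measure_ball_lt_top.ne)]
  exact havg

theorem setLIntegral_norm_shift_sub_le_average {u : E → F} (hq : 1 ≤ q) (hε : 0 < ε)
    {A B : Set E} (hA : MeasurableSet A) (hB : MeasurableSet B) (hAB : cthickening ε A ⊆ B)
    (hu : AEStronglyMeasurable u (μ.restrict (cthickening ε B))) {k : E} (hk : ‖k‖ = 1) :
    ∫⁻ x in A, ENNReal.ofReal (‖u (x + ε • k) - u x‖ ^ q / ε) ∂μ ≤
      ENNReal.ofReal (2 ^ ((finrank ℝ E : ℝ) + q)) / μ (ball 0 1) *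
        ∫⁻ z in ball 0 1, ∫⁻ x in B,
          ENNReal.ofReal (‖u (x + ε • z) - u x‖ ^ q / (ε * ‖z‖)) ∂μ ∂μ := by
  set v := hu.mk u
  have hshift : ∀ {S : Set E}, MeasurableSet S → S ⊆ B → ∀ w : E, ‖w‖ ≤ 1 →
      ∀ᵐ x ∂μ.restrict S, u (x + ε • w) - u x = v (x + ε • w) - v x := by
    intro S hS hSB w hw
    filter_upwards [ae_restrict_comp_add_right μ hS isClosed_cthickening.measurableSet
        hu.ae_eq_mk fun x hx => add_smul_mem_cthickening (hSB hx) hε.le hw,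
      ae_restrict_of_ae_restrict_of_subset (hSB.trans (self_subset_cthickening B)) hu.ae_eq_mk]
      with x hxw hx
    rw [hxw, hx]
  calc ∫⁻ x in A, ENNReal.ofReal (‖u (x + ε • k) - u x‖ ^ q / ε) ∂μ
      = ∫⁻ x in A, ENNReal.ofReal (‖v (x + ε • k) - v x‖ ^ q / ε) ∂μ := by
        refine lintegral_congr_ae ?_
        filter_upwards [hshift hA ((self_subset_cthickening A).trans hAB) k hk.le] with x hx
        rw [hx]
    _ ≤ _ := setLIntegral_norm_shift_sub_le_average_of_stronglyMeasurable μ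
        hu.stronglyMeasurable_mk hq hε hAB hk
    _ = _ := by
        refine congrArg _ (setLIntegral_congr_fun measurableSet_ball fun z hz => ?_)
        refine lintegral_congr_ae ?_
        filter_upwards [hshift hB subset_rfl z (mem_ball_zero_iff.1 hz).le] with x hx
        rw [hx]

end Averaging

theorem stmt_16_general (N m : ℕ) (Ω : Set (EuclideanSpace ℝ (Fin N)))
    (q : ℝ) (hq : 1 ≤ q)
    (u : EuclideanSpace ℝ (Fin N) → EuclideanSpace ℝ (Fin m))
    (hu : ∀ K : Set (EuclideanSpace ℝ (Fin N)), IsCompact K → K ⊆ Ω →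
      MemLp u (ENNReal.ofReal q) (volume.restrict K))
    (Ω₁ Ω₂ : Set (EuclideanSpace ℝ (Fin N)))
    (hΩ₂cpt : IsCompact (closure Ω₂))
    (k : EuclideanSpace ℝ (Fin N)) (hk : ‖k‖ = 1)
    (ε : ℝ) (hε : 0 < ε)
    (hε₁ : ENNReal.ofReal ε < ⨅ x ∈ Ω₁, EMetric.infEdist x Ω₂ᶜ)
    (hε₂ : ENNReal.ofReal ε < ⨅ x ∈ Ω₂, EMetric.infEdist x Ωᶜ) :
    (∫⁻ x in closure Ω₁, ENNReal.ofReal (‖u (x + ε • k) - u x‖ ^ q / ε)) ≤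
      (ENNReal.ofReal (2 ^ ((N : ℝ) + q)) /
          volume (ball (0 : EuclideanSpace ℝ (Fin N)) 1)) *
        ∫⁻ z in ball (0 : EuclideanSpace ℝ (Fin N)) 1,
          ∫⁻ x in closure Ω₂,
            ENNReal.ofReal (‖u (x + ε • z) - u x‖ ^ q / (ε * ‖z‖)) := by
  have hKΩ : cthickening ε (closure Ω₂) ⊆ Ω := by
    rw [cthickening_closure]
    exact cthickening_subset_of_lt_iInf_infEDist hε₂
  have h₁₂ : cthickening ε (closure Ω₁) ⊆ closure Ω₂ := by
    rw [cthickening_closure]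
    exact (cthickening_subset_of_lt_iInf_infEDist hε₁).trans subset_closure
  have hu₂ := (hu _ hΩ₂cpt.cthickening hKΩ).aestronglyMeasurable
  simpa only [finrank_euclideanSpace_fin] using
    setLIntegral_norm_shift_sub_le_average volume hq hε
      isClosed_closure.measurableSet isClosed_closure.measurableSet h₁₂ hu₂ hk

/-- averaging bound: for `u ∈ L^q_loc(Ω,ℝ^m)`, nested open sets
`Ω₁ ⊂⊂ Ω₂ ⊂⊂ Ω`, a unit vector `k` and
`0 < ε < min{dist(Ω₁, ℝ^N∖Ω₂), dist(Ω₂, ℝ^N∖Ω)}`,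
`∫_{cl Ω₁} |u(x+εk)-u(x)|^q/ε dx
  ≤ (2^{N+q}/L^N(B₁(0))) ∫_{B₁(0)} ∫_{cl Ω₂} |u(x+εz)-u(x)|^q/(ε|z|) dx dz`. -/
theorem stmt_16 (N m : ℕ) (Ω : Set (EuclideanSpace ℝ (Fin N))) (hΩopen : IsOpen Ω)
    (q : ℝ) (hq : 1 ≤ q)
    (u : EuclideanSpace ℝ (Fin N) → EuclideanSpace ℝ (Fin m))
    (hu : ∀ K : Set (EuclideanSpace ℝ (Fin N)), IsCompact K → K ⊆ Ω →
      MemLp u (ENNReal.ofReal q) (volume.restrict K))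
    (Ω₁ Ω₂ : Set (EuclideanSpace ℝ (Fin N)))
    (hΩ₁open : IsOpen Ω₁) (hΩ₂open : IsOpen Ω₂)
    (hΩ₁cpt : IsCompact (closure Ω₁)) (hΩ₂cpt : IsCompact (closure Ω₂))
    (hΩ₁₂ : closure Ω₁ ⊆ Ω₂) (hΩ₂Ω : closure Ω₂ ⊆ Ω)
    (k : EuclideanSpace ℝ (Fin N)) (hk : ‖k‖ = 1)
    (ε : ℝ) (hε : 0 < ε)
    (hε₁ : ENNReal.ofReal ε < ⨅ x ∈ Ω₁, EMetric.infEdist x Ω₂ᶜ)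
    (hε₂ : ENNReal.ofReal ε < ⨅ x ∈ Ω₂, EMetric.infEdist x Ωᶜ) :
    (∫⁻ x in closure Ω₁, ENNReal.ofReal (‖u (x + ε • k) - u x‖ ^ q / ε)) ≤
      (ENNReal.ofReal (2 ^ ((N : ℝ) + q)) /
          volume (ball (0 : EuclideanSpace ℝ (Fin N)) 1)) *
        ∫⁻ z in ball (0 : EuclideanSpace ℝ (Fin N)) 1,
          ∫⁻ x in closure Ω₂,
            ENNReal.ofReal (‖u (x + ε • z) - u x‖ ^ q / (ε * ‖z‖)) :=
  stmt_16_general N m Ω q hq u hu Ω₁ Ω₂ hΩ₂cpt k hk ε hε hε₁ hε₂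
end
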